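/- arXiv:2602.14179 — 4 statements merged into one kernel-verified Lean document; each statement's English description precedes it below -/
import Mathlib

section
/- Let M_3 be the melon graph with exactly three constituent paths, each of length exactly three (an 8-vertex graph). Then the representation number of M_3 equals 3. -/
open SimpleGraph

variable {V : Type*}

/-- Two letters `a` and `b` alternate in the word `w`. -/
def Alternates [DecidableEq V] (w : List V) (a b : V) : Prop :=
  (w.filter fun x => decide (x = a ∨ x = b)).Chain' (· ≠ ·)

/-- The word `w` represents the simple graph `G`. -/
def Represents [DecidableEq V] (G : SimpleGraph V) (w : List V) : Prop :=
  (∀ v : V, v ∈ w) ∧ ∀ a b : V, a ≠ b → (G.Adj a b ↔ Alternates w a b)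

/-- `G` is representable by a `k`-uniform word. -/
def KWordRepresentable [DecidableEq V] (G : SimpleGraph V) (k : ℕ) : Prop :=
  ∃ w : List V, (∀ v : V, w.count v = k) ∧ Represents G w

def WordRepresentable [DecidableEq V] (G : SimpleGraph V) : Prop :=
  ∃ w : List V, Represents G w

/-- The representation number of `G`. -/
noncomputable def repNum [DecidableEq V] (G : SimpleGraph V) : ℕ :=
  sInf {k | KWordRepresentable G k}

/-- `G` is permutationally `k`-representable. -/
def PermRepresentable [DecidableEq V] (G : SimpleGraph V) (k : ℕ) : Prop :=
  ∃ ps : Fin k → List V, (∀ i, ∀ v : V, (ps i).count v = 1) ∧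
    Represents G (List.ofFn ps).flatten

/-- The permutation-representation number of `G`. -/
noncomputable def permRepNum [DecidableEq V] (G : SimpleGraph V) : ℕ :=
  sInf {k | PermRepresentable G k}

/-- `G` is a melon graph with `m` constituent paths `P i` joining the endpoints `x` and `y`. -/
structure IsMelon (G : SimpleGraph V) (m : ℕ) (x y : V)
    (P : Fin m → G.Walk x y) : Prop where
  one_le_m : 1 ≤ m
  ne : x ≠ y
  isPath : ∀ i, (P i).IsPath
  one_le_length : ∀ i, 1 ≤ (P i).length
  internallyDisjoint : ∀ i j, i ≠ j →
    ∀ v, v ∈ (P i).support → v ∈ (P j).support → v = x ∨ v = y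
  support_cover : ∀ v, ∃ i, v ∈ (P i).support
  edge_cover : ∀ e, e ∈ G.edgeSet → ∃ i, e ∈ (P i).edges
  at_most_one_short : ∀ i j, (P i).length = 1 → (P j).length = 1 → i = j

/-- `G` is a melon graph. -/
def IsMelonGraph (G : SimpleGraph V) : Prop :=
  ∃ (m : ℕ) (x y : V) (P : Fin m → G.Walk x y), IsMelon G m x y P

/-- A transitive orientation of the edges of `G`, i.e. `G` is a comparability graph. -/
def HasTransitiveOrientation (G : SimpleGraph V) : Prop :=
  ∃ r : V → V → Prop, (∀ a b, r a b → G.Adj a b) ∧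
    (∀ a b, G.Adj a b → (r a b ↔ ¬ r b a)) ∧
    (∀ a b c, r a b → r b c → r a c)

def List.enum {α : Type*} (l : List α) : List (ℕ × α) := l.zipIdx.map Prod.swap

theorem List.enum_map_snd {α : Type*} (l : List α) : List.map Prod.snd l.enum = l := by
  rw [List.enum, List.map_map]; exact List.zipIdx_map_fst 0 l

theorem List.enum_map_fst {α : Type*} (l : List α) :
    List.map Prod.fst l.enum = List.range l.length := by
  rw [List.enum, List.map_map, List.range_eq_range']; exact List.zipIdx_map_snd 0 l

theorem List.mk_mem_enum_iff_getElem? {α : Type*} {i : ℕ} {x : α} {l : List α} :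
    (i, x) ∈ l.enum ↔ l[i]? = some x := by
  rw [← List.mk_mem_zipIdx_iff_getElem?]
  simp [List.enum, List.mem_map]

def Interleave (i1 i2 j1 j2 : ℕ) : Prop :=
  (i1 < j1 ∧ j1 < i2 ∧ i2 < j2) ∨ (j1 < i1 ∧ i1 < j2 ∧ j2 < i2)

lemma enum_pairwise {α : Type*} (w : List α) :
    w.enum.Pairwise (fun p q => p.1 < q.1) := by
  have h := List.pairwise_lt_range (n := w.length)
  rw [← List.enum_map_fst w, List.pairwise_map] at h
  exact h

lemma exists_two_occ {α : Type*} [DecidableEq α] (w : List α) (v : α) (h : w.count v = 2) :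
    ∃ i j : ℕ, i < j ∧ ∀ k, w[k]? = some v ↔ (k = i ∨ k = j) := by
  classical
  set L := w.enum.filter (fun p => p.2 == v) with hL
  have hlen : L.length = 2 := by
    have h1 : L.length = w.enum.countP (fun p => p.2 == v) :=
      List.countP_eq_length_filter.symm
    have h2 : w.enum.countP (fun p => p.2 == v) = (w.enum.map Prod.snd).countP (· == v) := by
      rw [List.countP_map]; rfl
    rw [h1, h2, List.enum_map_snd]; exact h
  have hpw : L.Pairwise (fun p q => p.1 < q.1) :=
    (enum_pairwise w).sublist List.filter_sublist
  obtain ⟨p1, p2, hL2⟩ := List.length_eq_two.1 hlen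
  have hmem : ∀ q : ℕ × α, q ∈ L ↔ (w[q.1]? = some q.2 ∧ q.2 = v) := by
    intro q
    rw [hL, List.mem_filter, List.mk_mem_enum_iff_getElem? (i := q.1) (x := q.2)]
    simp
  have hp1 : p1 ∈ L := by rw [hL2]; simp
  have hp2 : p2 ∈ L := by rw [hL2]; simp
  have h1 := (hmem p1).1 hp1
  have h2 := (hmem p2).1 hp2
  have hlt : p1.1 < p2.1 := by
    rw [hL2] at hpw; exact (List.pairwise_cons.1 hpw).1 p2 (by simp)
  refine ⟨p1.1, p2.1, hlt, fun k => ?_⟩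
  constructor
  · intro hk
    have : (k, v) ∈ L := by
      rw [hmem]; exact ⟨hk, rfl⟩
    rw [hL2] at this
    rcases List.mem_pair.1 this with h | h
    · left; rw [← h]
    · right; rw [← h]
  · rintro (rfl | rfl)
    · rw [← h1.2]; exact h1.1
    · rw [← h2.2]; exact h2.1


lemma enum_pairwise' {α : Type*} (w : List α) :
    w.enum.Pairwise (fun p q => p.1 < q.1) := by
  have h := List.pairwise_lt_range (n := w.length)
  rw [← List.enum_map_fst w, List.pairwise_map] at h
  exact h


lemma alternates_iff_interleave {α : Type*} [DecidableEq α] (w : List α) (a b : α)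
    (hab : a ≠ b) (i1 i2 j1 j2 : ℕ) (hi : i1 < i2) (hj : j1 < j2)
    (hA : ∀ k, w[k]? = some a ↔ (k = i1 ∨ k = i2))
    (hB : ∀ k, w[k]? = some b ↔ (k = j1 ∨ k = j2)) :
    Alternates w a b ↔ Interleave i1 i2 j1 j2 := by
  classical
  set p : α → Bool := fun x => decide (x = a ∨ x = b) with hp
  set L := w.enum.filter (p ∘ Prod.snd) with hLdef
  have hfilter : w.filter p = L.map Prod.snd := by
    conv_lhs => rw [← List.enum_map_snd w]
    rw [List.filter_map]
  -- distinctness of indices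
  have hij : ∀ k k', (k = i1 ∨ k = i2) → (k' = j1 ∨ k' = j2) → k ≠ k' := by
    rintro k k' hk hk' rfl
    exact hab (Option.some_injective _ ((hA k).2 hk ▸ (hB k).2 hk'))
  have hmem : ∀ q : ℕ × α,
      q ∈ L ↔ (q = (i1, a) ∨ q = (i2, a) ∨ q = (j1, b) ∨ q = (j2, b)) := by
    rintro ⟨k, z⟩
    rw [hLdef, List.mem_filter, List.mk_mem_enum_iff_getElem? (i := k) (x := z)]
    simp only [Function.comp, hp, decide_eq_true_eq, Prod.mk.injEq]
    constructor
    · rintro ⟨hget, (rfl | rfl)⟩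
      · rcases (hA k).1 hget with rfl | rfl
        · tauto
        · tauto
      · rcases (hB k).1 hget with rfl | rfl
        · tauto
        · tauto
    · rintro (⟨rfl, rfl⟩ | ⟨rfl, rfl⟩ | ⟨rfl, rfl⟩ | ⟨rfl, rfl⟩)
      · exact ⟨(hA _).2 (Or.inl rfl), Or.inl rfl⟩
      · exact ⟨(hA _).2 (Or.inr rfl), Or.inl rfl⟩
      · exact ⟨(hB _).2 (Or.inl rfl), Or.inr rfl⟩
      · exact ⟨(hB _).2 (Or.inr rfl), Or.inr rfl⟩
  have hpw : L.Pairwise (fun q q' : ℕ × α => q.1 < q'.1) :=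
    (enum_pairwise' w).sublist List.filter_sublist
  have hnodupL : L.Nodup := hpw.imp (fun h => by rintro rfl; exact absurd h (lt_irrefl _))
  haveI : Std.Antisymm (fun q q' : ℕ × α => q.1 < q'.1) :=
    ⟨fun q q' h h' => absurd (h.trans h') (lt_irrefl _)⟩
  -- helper to conclude in each ordering case
  have key : ∀ l : List (ℕ × α),
      l.Pairwise (fun q q' : ℕ × α => q.1 < q'.1) →
      (∀ q : ℕ × α, q ∈ l ↔ (q = (i1, a) ∨ q = (i2, a) ∨ q = (j1, b) ∨ q = (j2, b))) →
      L = l := by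
    intro l hpl hml
    have hnd : l.Nodup := hpl.imp (fun h => by rintro rfl; exact absurd h (lt_irrefl _))
    refine List.Perm.eq_of_pairwise' hpw hpl ?_
    rw [List.perm_ext_iff_of_nodup hnodupL hnd]
    intro q; rw [hmem, hml]
  have hne12 : i1 ≠ j1 := hij _ _ (Or.inl rfl) (Or.inl rfl)
  have hne12' : i1 ≠ j2 := hij _ _ (Or.inl rfl) (Or.inr rfl)
  have hne21 : i2 ≠ j1 := hij _ _ (Or.inr rfl) (Or.inl rfl)
  have hne22 : i2 ≠ j2 := hij _ _ (Or.inr rfl) (Or.inr rfl)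
  have hcases : (i1 < i2 ∧ i2 < j1 ∧ j1 < j2) ∨ (i1 < j1 ∧ j1 < i2 ∧ i2 < j2)
      ∨ (i1 < j1 ∧ j1 < j2 ∧ j2 < i2) ∨ (j1 < j2 ∧ j2 < i1 ∧ i1 < i2)
      ∨ (j1 < i1 ∧ i1 < j2 ∧ j2 < i2) ∨ (j1 < i1 ∧ i1 < i2 ∧ i2 < j2) := by omega
  have hchain : ∀ u v z t : α, List.Chain' (· ≠ ·) [u, v, z, t] ↔ (u ≠ v ∧ v ≠ z ∧ z ≠ t) := by
    intro u v z t; simp [List.Chain', List.isChain_cons_cons]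
  rcases hcases with h | h | h | h | h | h
  · -- i1 i2 j1 j2 : filter = [a,a,b,b], not alternating
    have hLeq : L = [(i1, a), (i2, a), (j1, b), (j2, b)] := by
      refine key _ ?_ ?_
      · simp; omega
      · intro q; simp; try tauto
    rw [Alternates, hfilter, hLeq]
    simp only [List.map_cons, List.map_nil, hchain]
    rw [Interleave]
    constructor
    · rintro ⟨h1, -⟩; exact absurd rfl h1
    · intro hI; omega
  · have hLeq : L = [(i1, a), (j1, b), (i2, a), (j2, b)] := by
      refine key _ ?_ ?_
      · simp; omega
      · intro q; simp; try tauto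
    rw [Alternates, hfilter, hLeq]
    simp only [List.map_cons, List.map_nil, hchain]
    rw [Interleave]
    constructor
    · intro _; omega
    · intro _; exact ⟨hab, hab.symm, hab⟩
  · have hLeq : L = [(i1, a), (j1, b), (j2, b), (i2, a)] := by
      refine key _ ?_ ?_
      · simp; omega
      · intro q; simp; try tauto
    rw [Alternates, hfilter, hLeq]
    simp only [List.map_cons, List.map_nil, hchain]
    rw [Interleave]
    constructor
    · rintro ⟨-, h2, -⟩; exact absurd rfl h2
    · intro hI; omega
  · have hLeq : L = [(j1, b), (j2, b), (i1, a), (i2, a)] := by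
      refine key _ ?_ ?_
      · simp; omega
      · intro q; simp; try tauto
    rw [Alternates, hfilter, hLeq]
    simp only [List.map_cons, List.map_nil, hchain]
    rw [Interleave]
    constructor
    · rintro ⟨h1, -⟩; exact absurd rfl h1
    · intro hI; omega
  · have hLeq : L = [(j1, b), (i1, a), (j2, b), (i2, a)] := by
      refine key _ ?_ ?_
      · simp; omega
      · intro q; simp; try tauto
    rw [Alternates, hfilter, hLeq]
    simp only [List.map_cons, List.map_nil, hchain]
    rw [Interleave]
    constructor
    · intro _; omega
    · intro _; exact ⟨hab.symm, hab, hab.symm⟩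
  · have hLeq : L = [(j1, b), (i1, a), (i2, a), (j2, b)] := by
      refine key _ ?_ ?_
      · simp; omega
      · intro q; simp; try tauto
    rw [Alternates, hfilter, hLeq]
    simp only [List.map_cons, List.map_nil, hchain]
    rw [Interleave]
    constructor
    · rintro ⟨-, h2, -⟩; exact absurd rfl h2
    · intro hI; omega


lemma interleave_comm {a1 a2 b1 b2 : ℕ} : Interleave a1 a2 b1 b2 ↔ Interleave b1 b2 a1 a2 := by
  simp only [Interleave]; tauto

lemma specN {x1 x2 y1 y2 A1 A2 B1 B2 : ℕ}
    (hx : x1 < x2) (hy : y1 < y2) (ha : A1 < A2) (hb : B1 < B2)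
    (hcfg : x1 < y1 ∧ y2 < x2)
    (hxa : Interleave x1 x2 A1 A2) (hab : Interleave A1 A2 B1 B2)
    (hby : Interleave B1 B2 y1 y2)
    (hnay : ¬ Interleave A1 A2 y1 y2) (hnxb : ¬ Interleave x1 x2 B1 B2)
    (hd1 : A1 ≠ y1 ∧ A1 ≠ y2 ∧ A2 ≠ y1 ∧ A2 ≠ y2)
    (hd2 : B1 ≠ x1 ∧ B1 ≠ x2 ∧ B2 ≠ x1 ∧ B2 ≠ x2) :
    ∃ p o r s : ℕ, (A1 = p ∧ A2 = o ∨ A1 = o ∧ A2 = p) ∧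
      (B1 = r ∧ B2 = s ∨ B1 = s ∧ B2 = r) ∧ (o < x1 ∨ x2 < o) ∧ (y1 < r ∧ r < y2) ∧
      ((x1 < p ∧ p < y1 ∧ x1 < s ∧ s < y1 ∧ s < p) ∨
        (y2 < p ∧ p < x2 ∧ y2 < s ∧ s < x2 ∧ p < s)) := by
  simp only [Interleave] at hxa hab hby hnay hnxb
  rcases hxa with ⟨h1, h2, h3⟩ | ⟨h1, h2, h3⟩ <;>
    rcases hby with ⟨g1, g2, g3⟩ | ⟨g1, g2, g3⟩
  · exact ⟨A1, A2, B2, B1, by omega⟩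
  · exact ⟨A1, A2, B1, B2, by omega⟩
  · exact ⟨A2, A1, B2, B1, by omega⟩
  · exact ⟨A2, A1, B1, B2, by omega⟩

lemma specD {x1 x2 y1 y2 A1 A2 B1 B2 : ℕ}
    (hx : x1 < x2) (hy : y1 < y2) (ha : A1 < A2) (hb : B1 < B2)
    (hcfg : x2 < y1)
    (hxa : Interleave x1 x2 A1 A2) (hab : Interleave A1 A2 B1 B2)
    (hby : Interleave B1 B2 y1 y2)
    (hnay : ¬ Interleave A1 A2 y1 y2) (hnxb : ¬ Interleave x1 x2 B1 B2)
    (hd1 : A1 ≠ y1 ∧ A1 ≠ y2 ∧ A2 ≠ y1 ∧ A2 ≠ y2)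
    (hd2 : B1 ≠ x1 ∧ B1 ≠ x2 ∧ B2 ≠ x1 ∧ B2 ≠ x2) :
    ∃ p o r s : ℕ, (A1 = p ∧ A2 = o ∨ A1 = o ∧ A2 = p) ∧
      (B1 = r ∧ B2 = s ∨ B1 = s ∧ B2 = r) ∧ (x1 < p ∧ p < x2) ∧ (y1 < r ∧ r < y2) ∧
      ((o < x1 ∧ o < s ∧ s < x1) ∨ (x2 < o ∧ o < y1 ∧ x2 < s ∧ s < o) ∨
        (y2 < o ∧ (s < x1 ∨ o < s))) := by
  simp only [Interleave] at hxa hab hby hnay hnxb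
  rcases hxa with ⟨h1, h2, h3⟩ | ⟨h1, h2, h3⟩ <;>
    rcases hby with ⟨g1, g2, g3⟩ | ⟨g1, g2, g3⟩
  · exact ⟨A1, A2, B2, B1, by omega⟩
  · exact ⟨A1, A2, B1, B2, by omega⟩
  · exact ⟨A2, A1, B2, B1, by omega⟩
  · exact ⟨A2, A1, B1, B2, by omega⟩

lemma finalN {x1 x2 y1 y2 A1 A2 B1 B2 C1 C2 D1 D2 p o r s p' o' r' s' : ℕ}
    (hcfg : x1 < y1 ∧ y2 < x2)
        (hsx : x1 < x2) (hsy : y1 < y2) (hsA : A1 < A2) (hsB : B1 < B2)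
    (hsC : C1 < C2) (hsD : D1 < D2)
    (hpa : A1 = p ∧ A2 = o ∨ A1 = o ∧ A2 = p)
    (hpb : B1 = r ∧ B2 = s ∨ B1 = s ∧ B2 = r)
    (hpc : C1 = p' ∧ C2 = o' ∨ C1 = o' ∧ C2 = p')
    (hpd : D1 = r' ∧ D2 = s' ∨ D1 = s' ∧ D2 = r')
    (hoi : o < x1 ∨ x2 < o) (hoj : o' < x1 ∨ x2 < o')
    (hr : y1 < r ∧ r < y2) (hr' : y1 < r' ∧ r' < y2)
    (hsi : (x1 < p ∧ p < y1 ∧ x1 < s ∧ s < y1 ∧ s < p) ∨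
      (y2 < p ∧ p < x2 ∧ y2 < s ∧ s < x2 ∧ p < s))
    (hsj : (x1 < p' ∧ p' < y1 ∧ x1 < s' ∧ s' < y1 ∧ s' < p') ∨
      (y2 < p' ∧ p' < x2 ∧ y2 < s' ∧ s' < x2 ∧ p' < s'))
    (hsame : (s < p ∧ s' < p') ∨ (p < s ∧ p' < s'))
    (hnAD : ¬ Interleave A1 A2 D1 D2) (hnCB : ¬ Interleave C1 C2 B1 B2)
    (hd1 : A1 ≠ D1 ∧ A1 ≠ D2 ∧ A2 ≠ D1 ∧ A2 ≠ D2)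
    (hd2 : C1 ≠ B1 ∧ C1 ≠ B2 ∧ C2 ≠ B1 ∧ C2 ≠ B2) : False := by
  simp only [Interleave] at hnAD hnCB
  omega

lemma finalDM {x1 x2 y1 y2 A1 A2 B1 B2 C1 C2 D1 D2 p o r s p' o' r' s' : ℕ}
    (hcfg : x2 < y1)
        (hsx : x1 < x2) (hsy : y1 < y2) (hsA : A1 < A2) (hsB : B1 < B2)
    (hsC : C1 < C2) (hsD : D1 < D2)
    (hpa : A1 = p ∧ A2 = o ∨ A1 = o ∧ A2 = p)
    (hpb : B1 = r ∧ B2 = s ∨ B1 = s ∧ B2 = r)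
    (hpc : C1 = p' ∧ C2 = o' ∨ C1 = o' ∧ C2 = p')
    (hpd : D1 = r' ∧ D2 = s' ∨ D1 = s' ∧ D2 = r')
    (hp : x1 < p ∧ p < x2) (hp' : x1 < p' ∧ p' < x2)
    (hr : y1 < r ∧ r < y2) (hr' : y1 < r' ∧ r' < y2)
    (hsi : x2 < o ∧ o < y1 ∧ x2 < s ∧ s < o)
    (hsj : x2 < o' ∧ o' < y1 ∧ x2 < s' ∧ s' < o')
    (hnAD : ¬ Interleave A1 A2 D1 D2) (hnCB : ¬ Interleave C1 C2 B1 B2)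
    (hd1 : A1 ≠ D1 ∧ A1 ≠ D2 ∧ A2 ≠ D1 ∧ A2 ≠ D2)
    (hd2 : C1 ≠ B1 ∧ C1 ≠ B2 ∧ C2 ≠ B1 ∧ C2 ≠ B2) : False := by
  simp only [Interleave] at hnAD hnCB
  omega

lemma finalDO {x1 x2 y1 y2 A1 A2 B1 B2 C1 C2 D1 D2 p o r s p' o' r' s' : ℕ}
    (hcfg : x2 < y1)
        (hsx : x1 < x2) (hsy : y1 < y2) (hsA : A1 < A2) (hsB : B1 < B2)
    (hsC : C1 < C2) (hsD : D1 < D2)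
    (hpa : A1 = p ∧ A2 = o ∨ A1 = o ∧ A2 = p)
    (hpb : B1 = r ∧ B2 = s ∨ B1 = s ∧ B2 = r)
    (hpc : C1 = p' ∧ C2 = o' ∨ C1 = o' ∧ C2 = p')
    (hpd : D1 = r' ∧ D2 = s' ∨ D1 = s' ∧ D2 = r')
    (hp : x1 < p ∧ p < x2) (hp' : x1 < p' ∧ p' < x2)
    (hr : y1 < r ∧ r < y2) (hr' : y1 < r' ∧ r' < y2)
    (hsi : (o < x1 ∧ o < s ∧ s < x1) ∨ (y2 < o ∧ (s < x1 ∨ o < s)))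
    (hsj : (o' < x1 ∧ o' < s' ∧ s' < x1) ∨ (y2 < o' ∧ (s' < x1 ∨ o' < s')))
    (hnAD : ¬ Interleave A1 A2 D1 D2) (hnCB : ¬ Interleave C1 C2 B1 B2)
    (hd1 : A1 ≠ D1 ∧ A1 ≠ D2 ∧ A2 ≠ D1 ∧ A2 ≠ D2)
    (hd2 : C1 ≠ B1 ∧ C1 ≠ B2 ∧ C2 ≠ B1 ∧ C2 ≠ B2) : False := by
  simp only [Interleave] at hnAD hnCB
  omega

lemma coreN (x1 x2 y1 y2 : ℕ) (A B : Fin 3 → ℕ × ℕ)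
    (hx : x1 < x2) (hy : y1 < y2)
    (ha : ∀ i, (A i).1 < (A i).2) (hb : ∀ i, (B i).1 < (B i).2)
    (hcfg : x1 < y1 ∧ y2 < x2)
    (hxa : ∀ i, Interleave x1 x2 (A i).1 (A i).2)
    (hab : ∀ i, Interleave (A i).1 (A i).2 (B i).1 (B i).2)
    (hby : ∀ i, Interleave (B i).1 (B i).2 y1 y2)
    (hnay : ∀ i, ¬ Interleave (A i).1 (A i).2 y1 y2)
    (hnxb : ∀ i, ¬ Interleave x1 x2 (B i).1 (B i).2)
    (hnab : ∀ i j, i ≠ j → ¬ Interleave (A i).1 (A i).2 (B j).1 (B j).2)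
    (hday : ∀ i, (A i).1 ≠ y1 ∧ (A i).1 ≠ y2 ∧ (A i).2 ≠ y1 ∧ (A i).2 ≠ y2)
    (hdbx : ∀ i, (B i).1 ≠ x1 ∧ (B i).1 ≠ x2 ∧ (B i).2 ≠ x1 ∧ (B i).2 ≠ x2)
    (hdab : ∀ i j, (A i).1 ≠ (B j).1 ∧ (A i).1 ≠ (B j).2 ∧
      (A i).2 ≠ (B j).1 ∧ (A i).2 ≠ (B j).2) : False := by
  have S : ∀ i, ∃ p o r s : ℕ, ((A i).1 = p ∧ (A i).2 = o ∨ (A i).1 = o ∧ (A i).2 = p) ∧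
      ((B i).1 = r ∧ (B i).2 = s ∨ (B i).1 = s ∧ (B i).2 = r) ∧
      (o < x1 ∨ x2 < o) ∧ (y1 < r ∧ r < y2) ∧
      ((x1 < p ∧ p < y1 ∧ x1 < s ∧ s < y1 ∧ s < p) ∨
        (y2 < p ∧ p < x2 ∧ y2 < s ∧ s < x2 ∧ p < s)) :=
    fun i => specN hx hy (ha i) (hb i) hcfg (hxa i) (hab i) (hby i) (hnay i) (hnxb i)
      (hday i) (hdbx i)
  choose p o r s hpa hpb ho hr hside using S
  have hdir : ∀ i, s i < p i ∨ p i < s i := by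
    intro i; rcases hside i with h | h
    · exact Or.inl h.2.2.2.2
    · exact Or.inr h.2.2.2.2
  have key : ∀ i j, i ≠ j → ((s i < p i ∧ s j < p j) ∨ (p i < s i ∧ p j < s j)) → False := by
    intro i j hij hsame
    exact finalN hcfg hx hy (ha i) (hb i) (ha j) (hb j) (hpa i) (hpb i) (hpa j) (hpb j)
      (ho i) (ho j) (hr i) (hr j) (hside i) (hside j) hsame
      (hnab i j hij) (hnab j i (Ne.symm hij)) (hdab i j) (hdab j i)
  rcases hdir 0 with d0 | d0 <;> rcases hdir 1 with d1 | d1 <;> rcases hdir 2 with d2 | d2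
  · exact key 0 1 (by decide) (Or.inl ⟨d0, d1⟩)
  · exact key 0 1 (by decide) (Or.inl ⟨d0, d1⟩)
  · exact key 0 2 (by decide) (Or.inl ⟨d0, d2⟩)
  · exact key 1 2 (by decide) (Or.inr ⟨d1, d2⟩)
  · exact key 1 2 (by decide) (Or.inl ⟨d1, d2⟩)
  · exact key 0 2 (by decide) (Or.inr ⟨d0, d2⟩)
  · exact key 0 1 (by decide) (Or.inr ⟨d0, d1⟩)
  · exact key 0 1 (by decide) (Or.inr ⟨d0, d1⟩)

lemma coreD (x1 x2 y1 y2 : ℕ) (A B : Fin 3 → ℕ × ℕ)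
    (hx : x1 < x2) (hy : y1 < y2)
    (ha : ∀ i, (A i).1 < (A i).2) (hb : ∀ i, (B i).1 < (B i).2)
    (hcfg : x2 < y1)
    (hxa : ∀ i, Interleave x1 x2 (A i).1 (A i).2)
    (hab : ∀ i, Interleave (A i).1 (A i).2 (B i).1 (B i).2)
    (hby : ∀ i, Interleave (B i).1 (B i).2 y1 y2)
    (hnay : ∀ i, ¬ Interleave (A i).1 (A i).2 y1 y2)
    (hnxb : ∀ i, ¬ Interleave x1 x2 (B i).1 (B i).2)
    (hnab : ∀ i j, i ≠ j → ¬ Interleave (A i).1 (A i).2 (B j).1 (B j).2)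
    (hday : ∀ i, (A i).1 ≠ y1 ∧ (A i).1 ≠ y2 ∧ (A i).2 ≠ y1 ∧ (A i).2 ≠ y2)
    (hdbx : ∀ i, (B i).1 ≠ x1 ∧ (B i).1 ≠ x2 ∧ (B i).2 ≠ x1 ∧ (B i).2 ≠ x2)
    (hdab : ∀ i j, (A i).1 ≠ (B j).1 ∧ (A i).1 ≠ (B j).2 ∧
      (A i).2 ≠ (B j).1 ∧ (A i).2 ≠ (B j).2) : False := by
  have S : ∀ i, ∃ p o r s : ℕ, ((A i).1 = p ∧ (A i).2 = o ∨ (A i).1 = o ∧ (A i).2 = p) ∧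
      ((B i).1 = r ∧ (B i).2 = s ∨ (B i).1 = s ∧ (B i).2 = r) ∧
      (x1 < p ∧ p < x2) ∧ (y1 < r ∧ r < y2) ∧
      ((o < x1 ∧ o < s ∧ s < x1) ∨ (x2 < o ∧ o < y1 ∧ x2 < s ∧ s < o) ∨
        (y2 < o ∧ (s < x1 ∨ o < s))) :=
    fun i => specD hx hy (ha i) (hb i) hcfg (hxa i) (hab i) (hby i) (hnay i) (hnxb i)
      (hday i) (hdbx i)
  choose p o r s hpa hpb hp hr hside using S
  have keyM : ∀ i j, i ≠ j →
      (x2 < o i ∧ o i < y1 ∧ x2 < s i ∧ s i < o i) →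
      (x2 < o j ∧ o j < y1 ∧ x2 < s j ∧ s j < o j) → False := by
    intro i j hij hi hj
    exact finalDM hcfg hx hy (ha i) (hb i) (ha j) (hb j) (hpa i) (hpb i) (hpa j) (hpb j)
      (hp i) (hp j) (hr i) (hr j) hi hj (hnab i j hij) (hnab j i (Ne.symm hij))
      (hdab i j) (hdab j i)
  have keyO : ∀ i j, i ≠ j →
      ((o i < x1 ∧ o i < s i ∧ s i < x1) ∨ (y2 < o i ∧ (s i < x1 ∨ o i < s i))) →
      ((o j < x1 ∧ o j < s j ∧ s j < x1) ∨ (y2 < o j ∧ (s j < x1 ∨ o j < s j))) → False := by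
    intro i j hij hi hj
    exact finalDO hcfg hx hy (ha i) (hb i) (ha j) (hb j) (hpa i) (hpb i) (hpa j) (hpb j)
      (hp i) (hp j) (hr i) (hr j) hi hj (hnab i j hij) (hnab j i (Ne.symm hij))
      (hdab i j) (hdab j i)
  have hcls : ∀ i, (x2 < o i ∧ o i < y1 ∧ x2 < s i ∧ s i < o i) ∨
      ((o i < x1 ∧ o i < s i ∧ s i < x1) ∨ (y2 < o i ∧ (s i < x1 ∨ o i < s i))) := by
    intro i; rcases hside i with h | h | h
    · exact Or.inr (Or.inl h)
    · exact Or.inl h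
    · exact Or.inr (Or.inr h)
  rcases hcls 0 with d0 | d0 <;> rcases hcls 1 with d1 | d1 <;> rcases hcls 2 with d2 | d2
  · exact keyM 0 1 (by decide) d0 d1
  · exact keyM 0 1 (by decide) d0 d1
  · exact keyM 0 2 (by decide) d0 d2
  · exact keyO 1 2 (by decide) d1 d2
  · exact keyM 1 2 (by decide) d1 d2
  · exact keyO 0 2 (by decide) d0 d2
  · exact keyO 0 1 (by decide) d0 d1
  · exact keyO 0 1 (by decide) d0 d1

lemma core (x1 x2 y1 y2 : ℕ) (A B : Fin 3 → ℕ × ℕ)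
    (hx : x1 < x2) (hy : y1 < y2)
    (ha : ∀ i, (A i).1 < (A i).2) (hb : ∀ i, (B i).1 < (B i).2)
    (hxa : ∀ i, Interleave x1 x2 (A i).1 (A i).2)
    (hab : ∀ i, Interleave (A i).1 (A i).2 (B i).1 (B i).2)
    (hby : ∀ i, Interleave (B i).1 (B i).2 y1 y2)
    (hnxy : ¬ Interleave x1 x2 y1 y2)
    (hnay : ∀ i, ¬ Interleave (A i).1 (A i).2 y1 y2)
    (hnxb : ∀ i, ¬ Interleave x1 x2 (B i).1 (B i).2)
    (hnab : ∀ i j, i ≠ j → ¬ Interleave (A i).1 (A i).2 (B j).1 (B j).2)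
    (hdxy : x1 ≠ y1 ∧ x1 ≠ y2 ∧ x2 ≠ y1 ∧ x2 ≠ y2)
    (hday : ∀ i, (A i).1 ≠ y1 ∧ (A i).1 ≠ y2 ∧ (A i).2 ≠ y1 ∧ (A i).2 ≠ y2)
    (hdbx : ∀ i, (B i).1 ≠ x1 ∧ (B i).1 ≠ x2 ∧ (B i).2 ≠ x1 ∧ (B i).2 ≠ x2)
    (hdab : ∀ i j, (A i).1 ≠ (B j).1 ∧ (A i).1 ≠ (B j).2 ∧
      (A i).2 ≠ (B j).1 ∧ (A i).2 ≠ (B j).2) : False := by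
  have hcfg : x2 < y1 ∨ (x1 < y1 ∧ y2 < x2) ∨ y2 < x1 ∨ (y1 < x1 ∧ x2 < y2) := by
    simp only [Interleave] at hnxy; omega
  rcases hcfg with h | h | h | h
  · exact coreD x1 x2 y1 y2 A B hx hy ha hb h hxa hab hby hnay hnxb hnab hday hdbx hdab
  · exact coreN x1 x2 y1 y2 A B hx hy ha hb h hxa hab hby hnay hnxb hnab hday hdbx hdab
  · exact coreD y1 y2 x1 x2 B A hy hx hb ha h
      (fun i => interleave_comm.1 (hby i)) (fun i => interleave_comm.1 (hab i))
      (fun i => interleave_comm.1 (hxa i)) (fun i => fun hc => (hnxb i) (interleave_comm.1 hc))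
      (fun i => fun hc => (hnay i) (interleave_comm.1 hc))
      (fun i j hij hc => hnab j i (Ne.symm hij) (interleave_comm.1 hc))
      (fun i => by have := hdbx i; tauto) (fun i => by have := hday i; tauto)
      (fun i j => by have := hdab j i; tauto)
  · exact coreN y1 y2 x1 x2 B A hy hx hb ha h
      (fun i => interleave_comm.1 (hby i)) (fun i => interleave_comm.1 (hab i))
      (fun i => interleave_comm.1 (hxa i)) (fun i => fun hc => (hnxb i) (interleave_comm.1 hc))
      (fun i => fun hc => (hnay i) (interleave_comm.1 hc))
      (fun i j hij hc => hnab j i (Ne.symm hij) (interleave_comm.1 hc))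
      (fun i => by have := hdbx i; tauto) (fun i => by have := hday i; tauto)
      (fun i j => by have := hdab j i; tauto)


lemma walk_len3 {G : SimpleGraph W} {x y : W} (w : G.Walk x y)
    (h : w.length = 3) :
    ∃ a b : W, G.Adj x a ∧ G.Adj a b ∧ G.Adj b y ∧
      w.support = [x, a, b, y] ∧ w.edges = [s(x, a), s(a, b), s(b, y)] := by
  cases w with
  | nil => simp at h
  | cons h1 w1 =>
    cases w1 with
    | nil => simp at h
    | cons h2 w2 =>
      cases w2 with
      | nil => simp at h
      | cons h3 w3 =>
        cases w3 with
        | nil => exact ⟨_, _, h1, h2, h3, by simp, by simp⟩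
        | cons h4 w4 => simp [SimpleGraph.Walk.length_cons] at h

structure MelonData (G : SimpleGraph W) (x y : W) (a b : Fin 3 → W) : Prop where
  cover : ∀ v : W, v = x ∨ v = y ∨ (∃ i, v = a i) ∨ (∃ i, v = b i)
  adjxa : ∀ i, G.Adj x (a i)
  adjab : ∀ i, G.Adj (a i) (b i)
  adjby : ∀ i, G.Adj (b i) y
  nxy : x ≠ y
  nxa : ∀ i, x ≠ a i
  nxb : ∀ i, x ≠ b i
  nya : ∀ i, y ≠ a i
  nyb : ∀ i, y ≠ b i
  nab : ∀ i j, a i ≠ b j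
  naa : ∀ i j, i ≠ j → a i ≠ a j
  nbb : ∀ i j, i ≠ j → b i ≠ b j
  nadjxy : ¬ G.Adj x y
  nadjxb : ∀ i, ¬ G.Adj x (b i)
  nadjay : ∀ i, ¬ G.Adj (a i) y
  nadjaa : ∀ i j, i ≠ j → ¬ G.Adj (a i) (a j)
  nadjbb : ∀ i j, i ≠ j → ¬ G.Adj (b i) (b j)
  nadjab : ∀ i j, i ≠ j → ¬ G.Adj (a i) (b j)

lemma melon_structure {G : SimpleGraph W} {x y : W} {P : Fin 3 → G.Walk x y}
    (hM : IsMelon G 3 x y P) (hlen : ∀ i, (P i).length = 3) :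
    ∃ a b : Fin 3 → W, MelonData G x y a b := by
  have H := fun i => walk_len3 (P i) (hlen i)
  choose a b hxa hab hby hsup hedg using H
  have hnd : ∀ i, (P i).support.Nodup := fun i => (hM.isPath i).support_nodup
  have hd : ∀ i, x ≠ a i ∧ x ≠ b i ∧ x ≠ y ∧ a i ≠ b i ∧ a i ≠ y ∧ b i ≠ y := by
    intro i
    have h := hnd i
    rw [hsup i] at h
    simp only [List.nodup_cons, List.mem_cons, List.not_mem_nil, or_false,
      List.nodup_nil, and_true, not_or] at h
    obtain ⟨⟨h1, h2, h3⟩, ⟨h4, h5⟩, h6, -⟩ := h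
    exact ⟨h1, h2, h3, h4, h5, h6⟩
  have nxa : ∀ i, x ≠ a i := fun i => (hd i).1
  have nxb : ∀ i, x ≠ b i := fun i => (hd i).2.1
  have nxy : x ≠ y := (hd 0).2.2.1
  have nab' : ∀ i, a i ≠ b i := fun i => (hd i).2.2.2.1
  have nay : ∀ i, a i ≠ y := fun i => (hd i).2.2.2.2.1
  have nby : ∀ i, b i ≠ y := fun i => (hd i).2.2.2.2.2
  have hmema : ∀ i, a i ∈ (P i).support := by intro i; rw [hsup i]; simp
  have hmemb : ∀ i, b i ∈ (P i).support := by intro i; rw [hsup i]; simp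
  have hnotmema : ∀ i j, i ≠ j → a i ∉ (P j).support := by
    intro i j hij hmem
    rcases hM.internallyDisjoint i j hij (a i) (hmema i) hmem with h | h
    · exact nxa i h.symm
    · exact nay i h
  have hnotmemb : ∀ i j, i ≠ j → b i ∉ (P j).support := by
    intro i j hij hmem
    rcases hM.internallyDisjoint i j hij (b i) (hmemb i) hmem with h | h
    · exact nxb i h.symm
    · exact nby i h
  have naa : ∀ i j, i ≠ j → a i ≠ a j := by
    intro i j hij h
    exact hnotmema i j hij (h ▸ hmema j)
  have nbb : ∀ i j, i ≠ j → b i ≠ b j := by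
    intro i j hij h
    exact hnotmemb i j hij (h ▸ hmemb j)
  have nab : ∀ i j, a i ≠ b j := by
    intro i j h
    by_cases hij : i = j
    · subst hij; exact nab' i h
    · have : a i ∈ (P j).support := by rw [hsup j]; simp [h]
      exact hnotmema i j hij this
  have key : ∀ u v : W, G.Adj u v →
      ∃ i, (u = x ∧ v = a i) ∨ (u = a i ∧ v = x) ∨ (u = a i ∧ v = b i) ∨
        (u = b i ∧ v = a i) ∨ (u = b i ∧ v = y) ∨ (u = y ∧ v = b i) := by
    intro u v huv
    obtain ⟨i, hi⟩ := hM.edge_cover s(u, v) huv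
    rw [hedg i] at hi
    simp only [List.mem_cons, List.not_mem_nil, or_false] at hi
    refine ⟨i, ?_⟩
    rcases hi with h | h | h <;> rw [Sym2.eq_iff] at h <;> tauto
  have eqa : ∀ i j, a i = a j → i = j := by
    intro i j h; by_contra hij; exact naa i j hij h
  have eqb : ∀ i j, b i = b j → i = j := by
    intro i j h; by_contra hij; exact nbb i j hij h
  have hcover : ∀ v : W, v = x ∨ v = y ∨ (∃ i, v = a i) ∨ (∃ i, v = b i) := by
    intro v
    obtain ⟨i, hv⟩ := hM.support_cover v
    rw [hsup i] at hv
    simp only [List.mem_cons, List.not_mem_nil, or_false] at hv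
    rcases hv with h | h | h | h
    · exact Or.inl h
    · exact Or.inr (Or.inr (Or.inl ⟨i, h⟩))
    · exact Or.inr (Or.inr (Or.inr ⟨i, h⟩))
    · exact Or.inr (Or.inl h)
  refine ⟨a, b, ⟨hcover, hxa, hab, hby, nxy, nxa, nxb,
    fun i h => nay i h.symm, fun i h => nby i h.symm, nab, naa, nbb, ?_, ?_, ?_, ?_, ?_, ?_⟩⟩
  · intro hadj
    obtain ⟨i, h⟩ := key _ _ hadj
    rcases h with ⟨h1, h2⟩ | ⟨h1, h2⟩ | ⟨h1, h2⟩ | ⟨h1, h2⟩ | ⟨h1, h2⟩ | ⟨h1, h2⟩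
    · exact nay i h2.symm
    · exact nxa i h1
    · exact nxa i h1
    · exact nxb i h1
    · exact nxb i h1
    · exact nxy h1
  · intro i hadj
    obtain ⟨j, h⟩ := key _ _ hadj
    rcases h with ⟨h1, h2⟩ | ⟨h1, h2⟩ | ⟨h1, h2⟩ | ⟨h1, h2⟩ | ⟨h1, h2⟩ | ⟨h1, h2⟩
    · exact nab j i (h2.symm)
    · exact nxa j h1
    · exact nxa j h1
    · exact nxb j h1
    · exact nxb j h1
    · exact nxy h1
  · intro i hadj
    obtain ⟨j, h⟩ := key _ _ hadj
    rcases h with ⟨h1, h2⟩ | ⟨h1, h2⟩ | ⟨h1, h2⟩ | ⟨h1, h2⟩ | ⟨h1, h2⟩ | ⟨h1, h2⟩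
    · exact nxa i h1.symm
    · exact nxy h2.symm
    · exact nby j h2.symm
    · exact nab i j h1
    · exact nab i j h1
    · exact nay i h1
  · intro i j hij hadj
    obtain ⟨k, h⟩ := key _ _ hadj
    rcases h with ⟨h1, h2⟩ | ⟨h1, h2⟩ | ⟨h1, h2⟩ | ⟨h1, h2⟩ | ⟨h1, h2⟩ | ⟨h1, h2⟩
    · exact nxa i h1.symm
    · exact nxa j h2.symm
    · exact nab j k h2
    · exact nab i k h1
    · exact nab i k h1
    · exact nay i h1
  · intro i j hij hadj
    obtain ⟨k, h⟩ := key _ _ hadj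
    rcases h with ⟨h1, h2⟩ | ⟨h1, h2⟩ | ⟨h1, h2⟩ | ⟨h1, h2⟩ | ⟨h1, h2⟩ | ⟨h1, h2⟩
    · exact nab k j h2.symm
    · exact nab k i h1.symm
    · exact nab k i h1.symm
    · exact nab k j h2.symm
    · exact nby j h2
    · exact nby i h1
  · intro i j hij hadj
    obtain ⟨k, h⟩ := key _ _ hadj
    rcases h with ⟨h1, h2⟩ | ⟨h1, h2⟩ | ⟨h1, h2⟩ | ⟨h1, h2⟩ | ⟨h1, h2⟩ | ⟨h1, h2⟩
    · exact nab k j h2.symm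
    · exact nxb j h2.symm
    · exact hij ((eqa i k h1).trans (eqb j k h2).symm)
    · exact nab i k h1
    · exact nab i k h1
    · exact nay i h1


def mw : List (Fin 8) :=
  [2,0,1,6,5,4,7,3, 0,4,3,6,5,2,1,7, 2,6,4,7,0,3,5,1]

def mE : List (Fin 8 × Fin 8) := [(0,1),(1,2),(2,7),(0,3),(3,4),(4,7),(0,5),(5,6),(6,7)]

def rc (i j : Fin 8) : Prop := (i, j) ∈ mE ∨ (j, i) ∈ mE

instance (i j : Fin 8) : Decidable (rc i j) :=
  inferInstanceAs (Decidable ((i, j) ∈ mE ∨ (j, i) ∈ mE))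

instance altDec {W : Type*} [DecidableEq W] (w : List W) (a b : W) :
    Decidable (Alternates w a b) :=
  inferInstanceAs (Decidable (List.IsChain _ (w.filter fun x => decide (x = a ∨ x = b))))

lemma mw_count : ∀ i : Fin 8, mw.count i = 3 := by decide
lemma mw_mem : ∀ i : Fin 8, i ∈ mw := by decide
lemma mw_rep : ∀ i j : Fin 8, i ≠ j → (rc i j ↔ Alternates mw i j) := by decide

lemma alternates_map {α β : Type*} [DecidableEq α] [DecidableEq β] {f : α → β}
    (hf : Function.Injective f) (w : List α) (i j : α) :
    Alternates (w.map f) (f i) (f j) ↔ Alternates w i j := by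
  unfold Alternates List.Chain'
  rw [List.filter_map]
  have hpf : ((fun x => decide (x = f i ∨ x = f j)) ∘ f) = fun z => decide (z = i ∨ z = j) := by
    funext z
    simp [hf.eq_iff]
  rw [hpf, List.isChain_map]
  constructor
  · exact fun h => h.imp fun a b hab e => hab (by rw [e])
  · exact fun h => h.imp fun a b hab e => hab (hf e)


def idx8 {W : Type*} (x a0 b0 a1 b1 a2 b2 y : W) : Fin 8 → W
  | 0 => x | 1 => a0 | 2 => b0 | 3 => a1 | 4 => b1 | 5 => a2 | 6 => b2 | 7 => y

lemma represents_of_index {W : Type*} [DecidableEq W] {G : SimpleGraph W}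
    (f : Fin 8 → W) (hsurj : ∀ v : W, ∃ i : Fin 8, v = f i)
    (hinj : Function.Injective f)
    (htr : ∀ i j : Fin 8, G.Adj (f i) (f j) ↔ rc i j) : KWordRepresentable G 3 := by
  refine ⟨mw.map f, ?_, ?_, ?_⟩
  · intro v
    obtain ⟨i, rfl⟩ := hsurj v
    rw [List.count_map_of_injective _ f hinj, mw_count]
  · intro v
    obtain ⟨i, rfl⟩ := hsurj v
    exact List.mem_map_of_mem (f := f) (mw_mem i)
  · intro u v huv
    obtain ⟨i, rfl⟩ := hsurj u
    obtain ⟨j, rfl⟩ := hsurj v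
    have hij : i ≠ j := fun h => huv (by rw [h])
    rw [htr i j, alternates_map hinj]
    exact (mw_rep i j hij)

lemma upper {W : Type*} [DecidableEq W] {G : SimpleGraph W} {x y : W} {a b : Fin 3 → W}
    (D : MelonData G x y a b) : KWordRepresentable G 3 := by
  classical
  have hloop : ∀ v, ¬ G.Adj v v := fun v => G.loopless.irrefl v
  have adjax : ∀ i, G.Adj (a i) x := fun i => (D.adjxa i).symm
  have adjba : ∀ i, G.Adj (b i) (a i) := fun i => (D.adjab i).symm
  have adjyb : ∀ i, G.Adj y (b i) := fun i => (D.adjby i).symm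
  have nadjyx : ¬ G.Adj y x := fun h => D.nadjxy h.symm
  have nadjbx : ∀ i, ¬ G.Adj (b i) x := fun i h => D.nadjxb i h.symm
  have nadjya : ∀ i, ¬ G.Adj y (a i) := fun i h => D.nadjay i h.symm
  have nadjba : ∀ i j, i ≠ j → ¬ G.Adj (b i) (a j) := fun i j hij h =>
    D.nadjab j i (Ne.symm hij) h.symm
  have nax : ∀ i, a i ≠ x := fun i => (D.nxa i).symm
  have nbx : ∀ i, b i ≠ x := fun i => (D.nxb i).symm
  have nay : ∀ i, a i ≠ y := fun i => (D.nya i).symm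
  have nby : ∀ i, b i ≠ y := fun i => (D.nyb i).symm
  have nba : ∀ i j, b i ≠ a j := fun i j => (D.nab j i).symm
  have nyx : y ≠ x := D.nxy.symm
  refine represents_of_index (idx8 x (a 0) (b 0) (a 1) (b 1) (a 2) (b 2) y) ?_ ?_ ?_
  · intro v
    rcases D.cover v with rfl | rfl | ⟨i, rfl⟩ | ⟨i, rfl⟩
    · exact ⟨0, rfl⟩
    · exact ⟨7, rfl⟩
    · fin_cases i
      · exact ⟨1, rfl⟩
      · exact ⟨3, rfl⟩
      · exact ⟨5, rfl⟩
    · fin_cases i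
      · exact ⟨2, rfl⟩
      · exact ⟨4, rfl⟩
      · exact ⟨6, rfl⟩
  · intro i j hij
    fin_cases i <;> fin_cases j <;>
      simp_all [idx8, D.nxy, D.nxa, D.nxb, D.nya, D.nyb, D.nab, D.naa, D.nbb,
        nax, nbx, nay, nby, nba, nyx]
  · intro i j
    fin_cases i <;> fin_cases j <;>
      simp [idx8, rc, mE, hloop, D.adjxa, D.adjab, D.adjby, adjax, adjba, adjyb,
        D.nadjxy, D.nadjxb, D.nadjay, D.nadjaa, D.nadjbb, D.nadjab,
        nadjyx, nadjbx, nadjya, nadjba] <;> (try decide)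


lemma not_two {W : Type*} [DecidableEq W] {G : SimpleGraph W} {x y : W} {a b : Fin 3 → W}
    (D : MelonData G x y a b) : ¬ KWordRepresentable G 2 := by
  rintro ⟨w, hc, hmem, hiff⟩
  obtain ⟨X1, X2, hX, hXc⟩ := exists_two_occ w x (hc x)
  obtain ⟨Y1, Y2, hY, hYc⟩ := exists_two_occ w y (hc y)
  choose A1 A2 hA hAc using fun i => exists_two_occ w (a i) (hc (a i))
  choose B1 B2 hB hBc using fun i => exists_two_occ w (b i) (hc (b i))
  have hgX1 : w[X1]? = some x := (hXc X1).2 (Or.inl rfl)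
  have hgX2 : w[X2]? = some x := (hXc X2).2 (Or.inr rfl)
  have hgY1 : w[Y1]? = some y := (hYc Y1).2 (Or.inl rfl)
  have hgY2 : w[Y2]? = some y := (hYc Y2).2 (Or.inr rfl)
  have hgA1 : ∀ i, w[A1 i]? = some (a i) := fun i => (hAc i (A1 i)).2 (Or.inl rfl)
  have hgA2 : ∀ i, w[A2 i]? = some (a i) := fun i => (hAc i (A2 i)).2 (Or.inr rfl)
  have hgB1 : ∀ i, w[B1 i]? = some (b i) := fun i => (hBc i (B1 i)).2 (Or.inl rfl)
  have hgB2 : ∀ i, w[B2 i]? = some (b i) := fun i => (hBc i (B2 i)).2 (Or.inr rfl)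
  have hne : ∀ {u v : W} {iu iv : ℕ}, u ≠ v → w[iu]? = some u → w[iv]? = some v → iu ≠ iv := by
    intro u v iu iv huv h1 h2 h
    rw [h] at h1; rw [h1] at h2; exact huv (Option.some.inj h2)
  -- crossing facts
  have cxa : ∀ i, Interleave X1 X2 (A1 i) (A2 i) := fun i =>
    (alternates_iff_interleave w x (a i) (D.nxa i) _ _ _ _ hX (hA i) hXc (hAc i)).1
      ((hiff x (a i) (D.nxa i)).1 (D.adjxa i))
  have cab : ∀ i, Interleave (A1 i) (A2 i) (B1 i) (B2 i) := fun i =>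
    (alternates_iff_interleave w (a i) (b i) (D.nab i i) _ _ _ _ (hA i) (hB i)
      (hAc i) (hBc i)).1 ((hiff (a i) (b i) (D.nab i i)).1 (D.adjab i))
  have cby : ∀ i, Interleave (B1 i) (B2 i) Y1 Y2 := fun i =>
    (alternates_iff_interleave w (b i) y (D.nyb i).symm _ _ _ _ (hB i) hY
      (hBc i) hYc).1 ((hiff (b i) y (D.nyb i).symm).1 (D.adjby i))
  have nxy : ¬ Interleave X1 X2 Y1 Y2 := fun hI =>
    D.nadjxy ((hiff x y D.nxy).2
      ((alternates_iff_interleave w x y D.nxy _ _ _ _ hX hY hXc hYc).2 hI))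
  have nay : ∀ i, ¬ Interleave (A1 i) (A2 i) Y1 Y2 := fun i hI =>
    D.nadjay i ((hiff (a i) y (D.nya i).symm).2
      ((alternates_iff_interleave w (a i) y (D.nya i).symm _ _ _ _ (hA i) hY (hAc i) hYc).2 hI))
  have nxb : ∀ i, ¬ Interleave X1 X2 (B1 i) (B2 i) := fun i hI =>
    D.nadjxb i ((hiff x (b i) (D.nxb i)).2
      ((alternates_iff_interleave w x (b i) (D.nxb i) _ _ _ _ hX (hB i) hXc (hBc i)).2 hI))
  have nab : ∀ i j, i ≠ j → ¬ Interleave (A1 i) (A2 i) (B1 j) (B2 j) := fun i j hij hI =>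
    D.nadjab i j hij ((hiff (a i) (b j) (D.nab i j)).2
      ((alternates_iff_interleave w (a i) (b j) (D.nab i j) _ _ _ _ (hA i) (hB j)
        (hAc i) (hBc j)).2 hI))
  exact core X1 X2 Y1 Y2 (fun i => (A1 i, A2 i)) (fun i => (B1 i, B2 i)) hX hY hA hB
    cxa cab cby nxy nay nxb nab
    ⟨hne D.nxy hgX1 hgY1, hne D.nxy hgX1 hgY2, hne D.nxy hgX2 hgY1, hne D.nxy hgX2 hgY2⟩
    (fun i => ⟨hne (D.nya i).symm (hgA1 i) hgY1, hne (D.nya i).symm (hgA1 i) hgY2,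
      hne (D.nya i).symm (hgA2 i) hgY1, hne (D.nya i).symm (hgA2 i) hgY2⟩)
    (fun i => ⟨hne (D.nxb i).symm (hgB1 i) hgX1, hne (D.nxb i).symm (hgB1 i) hgX2,
      hne (D.nxb i).symm (hgB2 i) hgX1, hne (D.nxb i).symm (hgB2 i) hgX2⟩)
    (fun i j => ⟨hne (D.nab i j) (hgA1 i) (hgB1 j), hne (D.nab i j) (hgA1 i) (hgB2 j),
      hne (D.nab i j) (hgA2 i) (hgB1 j), hne (D.nab i j) (hgA2 i) (hgB2 j)⟩)

lemma chain'_ne_of_count_le_one {α : Type*} [DecidableEq α] :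
    ∀ l : List α, (∀ z, l.count z ≤ 1) → l.Chain' (· ≠ ·) := by
  intro l
  induction l with
  | nil => intro _; exact List.isChain_nil
  | cons u t ih =>
    intro h
    cases t with
    | nil => exact List.isChain_singleton _
    | cons v t' =>
      show List.IsChain _ _
      rw [List.isChain_cons_cons]
      refine ⟨?_, ih ?_⟩
      · rintro rfl
        have hc := h u
        simp [List.count_cons_self] at hc
      · intro z
        have hc := h z
        rw [List.count_cons] at hc
        split at hc <;> omega

lemma not_one {W : Type*} [DecidableEq W] {G : SimpleGraph W} {x y : W} {a b : Fin 3 → W}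
    (D : MelonData G x y a b) : ¬ KWordRepresentable G 1 := by
  rintro ⟨w, hc, hmem, hiff⟩
  refine D.nadjxy ((hiff x y D.nxy).2 ?_)
  refine chain'_ne_of_count_le_one _ fun z => ?_
  calc (w.filter fun c => decide (c = x ∨ c = y)).count z ≤ w.count z :=
        (List.filter_sublist (l := w)).count_le z
    _ ≤ 1 := le_of_eq (hc z)

/-- The melon graph with exactly three constituent paths, each of length exactly
three, has representation number 3. -/
theorem melon_M3_repNum_eq_three {V : Type*} [Fintype V] [DecidableEq V]
    (G : SimpleGraph V) (x y : V) (P : Fin 3 → G.Walk x y)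
    (hM : IsMelon G 3 x y P) (hlen : ∀ i, (P i).length = 3) :
    repNum G = 3 := by
  classical
  obtain ⟨a, b, D⟩ := melon_structure hM hlen
  have h3 : KWordRepresentable G 3 := upper D
  have hleast : IsLeast {k | KWordRepresentable G k} 3 := by
    constructor
    · exact h3
    · intro k hk
      by_contra hlt
      push_neg at hlt
      interval_cases k
      · obtain ⟨w, hcw, hrep⟩ := hk
        have hmemx := hrep.1 x
        have hpos := List.count_pos_iff.2 hmemx
        rw [hcw x] at hpos
        omega
      · exact not_one D hk
      · exact not_two D hk
  unfold repNum
  exact hleast.csInf_eq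
end

section
/- A melon graph M = (E_1, …, E_m) is a comparability graph if and only if one of the following holds: (1) all constituent paths of M have lengths of the same parity; or (2) the endpoints 0 and 0′ are adjacent in M (i.e., some constituent path has length one) and every constituent path of even length has length exactly two. -/
open SimpleGraph

variable {V : Type*}

variable {G : SimpleGraph V}

theorem walk_getVert_inj {u v : V} (p : G.Walk u v) (hp : p.IsPath) :
    ∀ a b, a ≤ p.length → b ≤ p.length → p.getVert a = p.getVert b → a = b := by
  induction p with
  | nil => intro a b ha hb _; simp at ha hb; omega
  | cons h q ih =>
    rw [Walk.cons_isPath_iff] at hp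
    intro a b ha hb hab
    match a, b with
    | 0, 0 => rfl
    | 0, b + 1 =>
      exfalso
      apply hp.2
      rw [Walk.mem_support_iff_exists_getVert]
      exact ⟨b, by simpa [Walk.getVert_cons_succ] using hab.symm, by simpa using hb⟩
    | a + 1, 0 =>
      exfalso
      apply hp.2
      rw [Walk.mem_support_iff_exists_getVert]
      exact ⟨a, by simpa [Walk.getVert_cons_succ] using hab, by simpa using ha⟩
    | a + 1, b + 1 =>
      simp only [Walk.getVert_cons_succ] at hab
      have := ih hp.1 a b (by simpa using ha) (by simpa using hb) hab
      omega

theorem walk_edge_loc {u v a b : V} (p : G.Walk u v) (h : s(a, b) ∈ p.edges) :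
    ∃ k, k < p.length ∧ ((p.getVert k = a ∧ p.getVert (k+1) = b) ∨
      (p.getVert k = b ∧ p.getVert (k+1) = a)) := by
  induction p with
  | nil => simp at h
  | @cons u w v hadj q ih =>
    rw [Walk.edges_cons, List.mem_cons] at h
    rcases h with h | h
    · refine ⟨0, by simp, ?_⟩
      rw [Sym2.eq_iff] at h
      simp only [Walk.getVert_zero, Walk.getVert_cons_succ]
      rcases h with ⟨rfl, rfl⟩ | ⟨rfl, rfl⟩
      · left; exact ⟨rfl, rfl⟩
      · right; exact ⟨rfl, rfl⟩
    · obtain ⟨k, hk, hor⟩ := ih h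
      exact ⟨k + 1, by simp; omega, by simpa [Walk.getVert_cons_succ] using hor⟩

theorem walk_getVert_mem_support {u v : V} (p : G.Walk u v) {k : ℕ} (hk : k ≤ p.length) :
    p.getVert k ∈ p.support :=
  Walk.mem_support_iff_exists_getVert.mpr ⟨k, rfl, hk⟩

section Melon
variable {m : ℕ} {x y : V} {P : Fin m → G.Walk x y}

theorem melon_getVert_eq_x (hM : IsMelon G m x y P) (i : Fin m) {k : ℕ}
    (hk : k ≤ (P i).length) : (P i).getVert k = x ↔ k = 0 := by
  constructor
  · intro h
    exact walk_getVert_inj (P i) (hM.isPath i) k 0 hk (Nat.zero_le _)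
      (h.trans ((P i).getVert_zero).symm)
  · rintro rfl; exact (P i).getVert_zero

theorem melon_getVert_eq_y (hM : IsMelon G m x y P) (i : Fin m) {k : ℕ}
    (hk : k ≤ (P i).length) : (P i).getVert k = y ↔ k = (P i).length := by
  constructor
  · intro h
    exact walk_getVert_inj (P i) (hM.isPath i) k (P i).length hk le_rfl
      (h.trans ((P i).getVert_length).symm)
  · rintro rfl; exact (P i).getVert_length

theorem melon_internal_unique (hM : IsMelon G m x y P) {i j : Fin m} {k : ℕ}
    (h0 : 0 < k) (hk : k < (P i).length) (hj : (P i).getVert k ∈ (P j).support) :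
    j = i := by
  by_contra hne
  have hmem : (P i).getVert k ∈ (P i).support := walk_getVert_mem_support _ hk.le
  rcases hM.internallyDisjoint i j (fun h => hne h.symm) _ hmem hj with h | h
  · rw [melon_getVert_eq_x hM i hk.le] at h; omega
  · rw [melon_getVert_eq_y hM i hk.le] at h; omega

theorem melon_edge_loc (hM : IsMelon G m x y P) {a b : V} (hab : G.Adj a b) :
    ∃ i k, k < (P i).length ∧
      (((P i).getVert k = a ∧ (P i).getVert (k+1) = b) ∨
        ((P i).getVert k = b ∧ (P i).getVert (k+1) = a)) := by
  obtain ⟨i, hi⟩ := hM.edge_cover s(a,b) hab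
  obtain ⟨k, hk, h⟩ := walk_edge_loc _ hi
  exact ⟨i, k, hk, h⟩

end Melon

/-- A melon graph is a comparability graph iff either all constituent paths have
lengths of the same parity, or the endpoints are adjacent (some constituent path
has length one) and every constituent path of even length has length exactly two. -/
theorem melon_comparability_iff {V : Type*} (G : SimpleGraph V)
    (m : ℕ) (x y : V) (P : Fin m → G.Walk x y) (hM : IsMelon G m x y P) :
    HasTransitiveOrientation G ↔
      ((∀ i, Even (P i).length) ∨ (∀ i, Odd (P i).length)) ∨
        ((∃ i, (P i).length = 1) ∧
          ∀ i, Even (P i).length → (P i).length = 2) := by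
  classical
  have hpos : ∀ v : V, ∃ q : Fin m × ℕ, q.2 ≤ (P q.1).length ∧ (P q.1).getVert q.2 = v := by
    intro v
    obtain ⟨i, hi⟩ := hM.support_cover v
    obtain ⟨k, hk1, hk2⟩ := Walk.mem_support_iff_exists_getVert.mp hi
    exact ⟨(i, k), hk2, hk1⟩
  constructor
  · -- forward direction
    rintro ⟨r, hr1, hr2, hr3⟩
    by_contra hcond
    push_neg at hcond
    obtain ⟨⟨⟨ia, hia⟩, ⟨ib, hib⟩⟩, hB⟩ := hcond
    rw [Nat.not_even_iff_odd] at hia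
    rw [Nat.not_odd_iff_even] at hib
    -- choose the two paths forming a long chordless odd cycle
    obtain ⟨i, j, hLi, hLj, hn5, hshort⟩ :
        ∃ i j : Fin m, Odd (P i).length ∧ Even (P j).length ∧
          5 ≤ (P i).length + (P j).length ∧ ∀ k, (P k).length = 1 → k = i := by
      by_cases hsh : ∃ k, (P k).length = 1
      · obtain ⟨i0, hi0⟩ := hsh
        obtain ⟨j1, hj1e, hj1ne⟩ := hB ⟨i0, hi0⟩
        refine ⟨i0, j1, by rw [hi0]; exact odd_one, hj1e, ?_,
          fun k hk => hM.at_most_one_short k i0 hk hi0⟩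
        obtain ⟨t, ht⟩ := hj1e
        have h1 := hM.one_le_length j1
        omega
      · refine ⟨ia, ib, hia, hib, ?_, fun k hk => absurd ⟨k, hk⟩ hsh⟩
        obtain ⟨t, ht⟩ := hia
        obtain ⟨t', ht'⟩ := hib
        have h1 := hM.one_le_length ia
        have h2' := hM.one_le_length ib
        have hne1 : (P ia).length ≠ 1 := fun h => hsh ⟨ia, h⟩
        omega
    have hij : i ≠ j := by
      rintro rfl
      rw [← Nat.not_even_iff_odd] at hLi
      exact hLi hLj
    set n := (P i).length + (P j).length with hn
    have hnodd : Odd n := hLi.add_even hLj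
    have hLi1 : 1 ≤ (P i).length := hM.one_le_length i
    have hLj1 : 1 ≤ (P j).length := hM.one_le_length j
    have hn0 : 0 < n := by omega
    set w : ℕ → V := fun t => if t % n ≤ (P i).length then (P i).getVert (t % n)
      else (P j).getVert (n - t % n) with hw
    have hwmod : ∀ t, w t = w (t % n) := by
      intro t
      simp only [hw, Nat.mod_mod_of_dvd _ dvd_rfl]
    have hwA : ∀ b, b ≤ (P i).length → w b = (P i).getVert b := by
      intro b hb
      have hbn : b < n := by omega
      simp only [hw, Nat.mod_eq_of_lt hbn, if_pos hb]
    have hwB : ∀ b, (P i).length ≤ b → b ≤ n → w b = (P j).getVert (n - b) := by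
      intro b hb1 hb2
      by_cases hbe : b = n
      · rw [hbe]
        simp only [hw, Nat.mod_self, Nat.sub_self]
        rw [if_pos (Nat.zero_le _), Walk.getVert_zero, Walk.getVert_zero]
      · have hbn : b < n := by omega
        simp only [hw, Nat.mod_eq_of_lt hbn]
        by_cases hbi : b ≤ (P i).length
        · have hbL : b = (P i).length := le_antisymm hbi hb1
          rw [if_pos hbi, hbL, Walk.getVert_length,
            show n - (P i).length = (P j).length from by omega, Walk.getVert_length]
        · rw [if_neg hbi]
    have hUA : ∀ t c, t < n → c ≤ (P i).length → w t = (P i).getVert c → t = c := by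
      intro t c ht hc hwt
      by_cases hti : t ≤ (P i).length
      · rw [hwA t hti] at hwt
        exact walk_getVert_inj (P i) (hM.isPath i) t c hti hc hwt
      · exfalso
        rw [hwB t (by omega) ht.le] at hwt
        have hmem : (P j).getVert (n - t) ∈ (P i).support := by
          rw [hwt]; exact walk_getVert_mem_support _ hc
        have := melon_internal_unique hM (i := j) (by omega) (by omega) hmem
        exact hij this
    have hUB : ∀ t d, t < n → d ≤ (P j).length → w t = (P j).getVert d →
        ((t = 0 ∧ d = 0) ∨ t + d = n) := by
      intro t d ht hd hwt
      by_cases hti : t ≤ (P i).length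
      · rw [hwA t hti] at hwt
        by_cases ht0 : t = 0
        · rw [ht0, Walk.getVert_zero] at hwt
          left
          refine ⟨ht0, ?_⟩
          rw [← melon_getVert_eq_x hM j hd]
          exact hwt.symm
        · by_cases htL : t = (P i).length
          · rw [htL, Walk.getVert_length] at hwt
            have hdL : d = (P j).length := by
              rw [← melon_getVert_eq_y hM j hd]
              exact hwt.symm
            right; omega
          · exfalso
            have hmem : (P i).getVert t ∈ (P j).support := by
              rw [hwt]; exact walk_getVert_mem_support _ hd
            have := melon_internal_unique hM (i := i) (by omega) (by omega) hmem
            exact hij this.symm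
      · rw [hwB t (by omega) ht.le] at hwt
        have := walk_getVert_inj (P j) (hM.isPath j) (n - t) d (by omega) hd hwt
        right; omega
    have hwxy : ∀ t, t < n → ∀ k' : Fin m, k' ≠ i → k' ≠ j →
        w t ∈ (P k').support → w t = x ∨ w t = y := by
      intro t ht k' hki hkj hmem
      by_cases hti : t ≤ (P i).length
      · have hmi : w t ∈ (P i).support := by
          rw [hwA t hti]; exact walk_getVert_mem_support _ hti
        exact hM.internallyDisjoint k' i hki _ hmem hmi
      · have hmj : w t ∈ (P j).support := by
          rw [hwB t (by omega) ht.le]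
          exact walk_getVert_mem_support _ (by omega)
        exact hM.internallyDisjoint k' j hkj _ hmem hmj
    have hNBR : ∀ a b, a < n → b < n → G.Adj (w a) (w b) →
        (a + 1) % n = b ∨ (b + 1) % n = a := by
      have key : ∀ a b, a < n → b < n → ∀ (k : Fin m) c, c < (P k).length →
          (P k).getVert c = w a → (P k).getVert (c+1) = w b →
          (a + 1) % n = b ∨ (b + 1) % n = a := by
        intro a b ha hb k c hc hca hcb
        by_cases hki : k = i
        · subst hki
          have h1 : a = c := hUA a c ha hc.le hca.symm
          have h2' : b = c + 1 := hUA b (c+1) hb (by omega) hcb.symm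
          left
          rw [h1, ← h2']
          exact Nat.mod_eq_of_lt hb
        · by_cases hkj : k = j
          · subst hkj
            rcases hUB a c ha hc.le hca.symm with ⟨ha0, hc0⟩ | hac
            · rcases hUB b (c+1) hb (by omega) hcb.symm with ⟨-, hb0⟩ | hbc
              · omega
              · right
                rw [show b + 1 = n from by omega, Nat.mod_self]
                omega
            · rcases hUB b (c+1) hb (by omega) hcb.symm with ⟨hb0, hc1⟩ | hbc
              · omega
              · right
                rw [show b + 1 = a from by omega]
                exact Nat.mod_eq_of_lt ha
          · exfalso
            have hax : w a = x ∨ w a = y := by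
              apply hwxy a ha k hki hkj
              rw [← hca]; exact walk_getVert_mem_support _ hc.le
            have hbx : w b = x ∨ w b = y := by
              apply hwxy b hb k hki hkj
              rw [← hcb]; exact walk_getVert_mem_support _ (by omega)
            have hwax : w a = x := by
              rcases hax with h | h
              · exact h
              · exfalso
                rw [h, melon_getVert_eq_y hM k hc.le] at hca
                omega
            have hc0 : c = 0 := by
              rw [hwax, melon_getVert_eq_x hM k hc.le] at hca
              exact hca
            have hwby : w b = y := by
              rcases hbx with h | h
              · exfalso
                rw [h, melon_getVert_eq_x hM k (by omega)] at hcb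
                omega
              · exact h
            rw [hwby, melon_getVert_eq_y hM k (by omega)] at hcb
            have hLk : (P k).length = 1 := by omega
            exact hki (hshort k hLk)
      intro a b ha hb hadj
      obtain ⟨k, c, hc, hor⟩ := melon_edge_loc hM hadj
      rcases hor with ⟨h1, h2'⟩ | ⟨h1, h2'⟩
      · exact key a b ha hb k c hc h1 h2'
      · exact (key b a hb ha k c hc h1 h2').symm
    have hcancel : ∀ p c : ℕ, p < n → 0 < c → c < n → (p + c) % n ≠ p := by
      intro p c hp hc1 hc2 h
      rcases Nat.lt_or_ge (p + c) n with h' | h'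
      · rw [Nat.mod_eq_of_lt h'] at h; omega
      · rw [Nat.mod_eq_sub_mod h', Nat.mod_eq_of_lt (by omega)] at h; omega
    have hchord : ∀ s, ¬ G.Adj (w s) (w (s + 2)) := by
      intro s hadj
      have hb : s % n < n := Nat.mod_lt _ hn0
      have e2 : w (s+2) = w ((s % n + 2) % n) := by
        rw [hwmod (s+2)]
        congr 1
        exact (Nat.mod_add_mod s n 2).symm
      rw [hwmod s, e2] at hadj
      have hb2 : (s % n + 2) % n < n := Nat.mod_lt _ hn0
      rcases hNBR _ _ hb hb2 hadj with h | h
      · have hp : ((s % n + 1) % n + 1) % n = (s % n + 1) % n := by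
          rw [Nat.mod_add_mod, show s % n + 1 + 1 = s % n + 2 from by omega]
          exact h.symm
        exact hcancel _ 1 (Nat.mod_lt _ hn0) one_pos (by omega) hp
      · rw [Nat.mod_add_mod, show s % n + 2 + 1 = s % n + 3 from by omega] at h
        exact hcancel _ 3 hb (by omega) (by omega) h
    have hadjc : ∀ s, G.Adj (w s) (w (s + 1)) := by
      intro s
      have hb : s % n < n := Nat.mod_lt _ hn0
      have e1 : w (s+1) = w ((s % n + 1) % n) := by
        rw [hwmod (s+1)]
        congr 1
        exact (Nat.mod_add_mod s n 1).symm
      rw [hwmod s, e1]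
      by_cases hbi : s % n < (P i).length
      · rw [Nat.mod_eq_of_lt (show s % n + 1 < n from by omega), hwA _ hbi.le, hwA _ (by omega)]
        exact (P i).adj_getVert_succ hbi
      · by_cases hbn : s % n + 1 = n
        · have h1 : (s % n + 1) % n = 0 := by rw [hbn, Nat.mod_self]
          rw [h1, hwB _ (by omega) (by omega), hwA 0 (Nat.zero_le _), Walk.getVert_zero,
            show n - s % n = 1 from by omega]
          have h := (P j).adj_getVert_succ (show 0 < (P j).length from hM.one_le_length j)
          rw [Walk.getVert_zero] at h
          exact h.symm
        · rw [Nat.mod_eq_of_lt (show s % n + 1 < n from by omega), hwB _ (by omega) (by omega),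
            hwB _ (by omega) (by omega),
            show n - s % n = (n - (s % n + 1)) + 1 from by omega]
          exact ((P j).adj_getVert_succ (by omega)).symm
    have halt : ∀ s, (r (w (s+1)) (w (s+2)) ↔ ¬ r (w s) (w (s+1))) := by
      intro s
      have e1 := hadjc s
      have e2' : G.Adj (w (s+1)) (w (s+2)) := by
        have e2 := hadjc (s+1)
        rw [show s + 1 + 1 = s + 2 from by omega] at e2
        exact e2
      constructor
      · intro h2'' h1''
        exact hchord s (hr1 _ _ (hr3 _ _ _ h1'' h2''))
      · intro hns
        have h1' : r (w (s+1)) (w s) := by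
          by_contra hcon
          exact hns ((hr2 _ _ e1).mpr hcon)
        by_contra hcon2
        have h2'' : r (w (s+2)) (w (s+1)) := by
          by_contra hcon3
          exact hcon2 ((hr2 _ _ e2').mpr hcon3)
        exact hchord s (hr1 _ _ (hr3 _ _ _ h2'' h1')).symm
    have hD : ∀ s, (r (w s) (w (s+1)) ↔ (Even s ↔ r (w 0) (w 1))) := by
      intro s
      induction s with
      | zero => simp
      | succ t ih =>
        rw [show t + 1 + 1 = t + 2 from by omega, halt t, ih, Nat.even_add_one]
        tauto
    have hfin := hD n
    have hwn0 : w n = w 0 := by rw [hwmod n, Nat.mod_self]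
    have hwn1 : w (n+1) = w 1 := by
      rw [hwmod (n+1), Nat.mod_eq_sub_mod (by omega),
        show n + 1 - n = 1 from by omega, Nat.mod_eq_of_lt (by omega)]
    rw [hwn0, hwn1] at hfin
    have hne : ¬ Even n := Nat.not_even_iff_odd.mpr hnodd
    tauto
  · -- backward direction
    rintro (hpar | ⟨⟨i0, hi0⟩, h2⟩)
    · -- same parity case
      have hpar' : ∀ i j : Fin m, (P i).length % 2 = (P j).length % 2 := by
        rcases hpar with h | h
        · intro i j
          have hi := h i; have hj := h j
          rw [Nat.even_iff] at hi hj; omega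
        · intro i j
          have hi := h i; have hj := h j
          rw [Nat.odd_iff] at hi hj; omega
      obtain ⟨f, hflt, hf⟩ : ∃ f : V → ℕ, (∀ v, f v < 2) ∧
          ∀ v (i : Fin m) k, k ≤ (P i).length → (P i).getVert k = v → f v = k % 2 := by
        refine ⟨fun v => (hpos v).choose.2 % 2, fun v => Nat.mod_lt _ (by omega), ?_⟩
        intro v i k hk hv
        obtain ⟨hl, hgl⟩ := (hpos v).choose_spec
        show (hpos v).choose.2 % 2 = k % 2
        set j := (hpos v).choose.1 with hj
        set l := (hpos v).choose.2 with hlq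
        by_cases hji : j = i
        · subst hji
          have := walk_getVert_inj (P j) (hM.isPath j) l k hl hk (hgl.trans hv.symm)
          omega
        · have hvj : v ∈ (P j).support := by rw [← hgl]; exact walk_getVert_mem_support _ hl
          have hvi : v ∈ (P i).support := by rw [← hv]; exact walk_getVert_mem_support _ hk
          rcases hM.internallyDisjoint j i hji v hvj hvi with rfl | rfl
          · have h1 := (melon_getVert_eq_x hM j hl).mp hgl
            have h2' := (melon_getVert_eq_x hM i hk).mp hv
            omega
          · have h1 := (melon_getVert_eq_y hM j hl).mp hgl
            have h2' := (melon_getVert_eq_y hM i hk).mp hv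
            rw [h1, h2']
            exact hpar' j i
      have hedge : ∀ a b, G.Adj a b → f a ≠ f b := by
        intro a b hab
        obtain ⟨i, k, hk, hor⟩ := melon_edge_loc hM hab
        rcases hor with ⟨ha, hb⟩ | ⟨hb, ha⟩
        · have h1 := hf a i k hk.le ha
          have h2' := hf b i (k+1) (by omega) hb
          omega
        · have h1 := hf a i (k+1) (by omega) ha
          have h2' := hf b i k hk.le hb
          omega
      refine ⟨fun a b => G.Adj a b ∧ f a = 0 ∧ f b = 1, ?_, ?_, ?_⟩
      · rintro a b ⟨h, -, -⟩; exact h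
      · intro a b hab
        have hne := hedge a b hab
        have ha2 := hflt a
        have hb2 := hflt b
        constructor
        · rintro ⟨-, h0, h1⟩ ⟨-, h0', h1'⟩; omega
        · intro hn
          have h' : ¬ (f b = 0 ∧ f a = 1) := fun hc => hn ⟨hab.symm, hc.1, hc.2⟩
          exact ⟨hab, by omega, by omega⟩
      · rintro a b c ⟨-, -, h1⟩ ⟨-, h2', -⟩
        exfalso; omega
    · -- endpoints adjacent and every even path has length two
      have hxy : G.Adj x y := by
        have h01 : 0 < (P i0).length := hM.one_le_length i0
        have h := (P i0).adj_getVert_succ h01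
        rw [Walk.getVert_zero, show (0:ℕ)+1 = (P i0).length from by omega,
          Walk.getVert_length] at h
        exact h
      obtain ⟨f, hfy, hflt, hf⟩ : ∃ f : V → ℕ, f y = 2 ∧ (∀ v, v ≠ y → f v < 2) ∧
          ∀ v (i : Fin m) k, v ≠ y → k ≤ (P i).length → (P i).getVert k = v → f v = k % 2 := by
        refine ⟨fun v => if v = y then 2 else (hpos v).choose.2 % 2, by simp, ?_, ?_⟩
        · intro v hv
          simp only [if_neg hv]
          exact Nat.mod_lt _ (by omega)
        · intro v i k hv hk hgv
          simp only [if_neg hv]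
          obtain ⟨hl, hgl⟩ := (hpos v).choose_spec
          set j := (hpos v).choose.1 with hjq
          set l := (hpos v).choose.2 with hlq
          by_cases hji : j = i
          · subst hji
            have := walk_getVert_inj (P j) (hM.isPath j) l k hl hk (hgl.trans hgv.symm)
            omega
          · have hvj : v ∈ (P j).support := by rw [← hgl]; exact walk_getVert_mem_support _ hl
            have hvi : v ∈ (P i).support := by rw [← hgv]; exact walk_getVert_mem_support _ hk
            rcases hM.internallyDisjoint j i hji v hvj hvi with rfl | rfl
            · have h1 := (melon_getVert_eq_x hM j hl).mp hgl
              have h2' := (melon_getVert_eq_x hM i hk).mp hgv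
              omega
            · exact absurd rfl hv
      have hfx : f x = 0 := hf x i0 0 hM.ne (Nat.zero_le _) ((P i0).getVert_zero)
      have hfle : ∀ v, f v ≤ 2 := by
        intro v
        by_cases hv : v = y
        · rw [hv, hfy]
        · exact (hflt v hv).le
      have hedge : ∀ a b, G.Adj a b → f a ≠ f b := by
        have key : ∀ (i : Fin m) k, k < (P i).length →
            f ((P i).getVert k) ≠ f ((P i).getVert (k+1)) := by
          intro i k hk
          have hky : (P i).getVert k ≠ y := by
            intro h
            rw [melon_getVert_eq_y hM i hk.le] at h
            omega
          have hfk := hf _ i k hky hk.le rfl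
          by_cases hk1 : (P i).getVert (k+1) = y
          · rw [hk1, hfy, hfk]; omega
          · have hfk1 := hf _ i (k+1) hk1 (by omega) rfl
            rw [hfk, hfk1]; omega
        intro a b hab
        obtain ⟨i, k, hk, hor⟩ := melon_edge_loc hM hab
        rcases hor with ⟨ha, hb⟩ | ⟨hb, ha⟩
        · rw [← ha, ← hb]; exact key i k hk
        · rw [← ha, ← hb]; exact (key i k hk).symm
      refine ⟨fun a b => G.Adj a b ∧ f a < f b, ?_, ?_, ?_⟩
      · rintro a b ⟨h, -⟩; exact h
      · intro a b hab
        have hne := hedge a b hab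
        constructor
        · rintro ⟨-, h1⟩ ⟨-, h2'⟩; omega
        · intro hn
          have h' : ¬ f b < f a := fun hc => hn ⟨hab.symm, hc⟩
          exact ⟨hab, by omega⟩
      · rintro a b c ⟨hab, hab'⟩ ⟨hbc, hbc'⟩
        have hby : b ≠ y := by
          intro h
          rw [h, hfy] at hbc'
          have := hfle c
          omega
        have hcy : c = y := by
          by_contra hc
          have h1 := hflt c hc
          have h2' := hflt b hby
          omega
        rw [hcy] at hbc ⊢
        have hfb1 : f b = 1 := by
          have := hflt b hby
          omega
        obtain ⟨j, k, hk, hor⟩ := melon_edge_loc hM hbc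
        obtain ⟨hbk, hkL⟩ : b = (P j).getVert k ∧ k + 1 = (P j).length := by
          rcases hor with ⟨hb', hy'⟩ | ⟨hy', hb'⟩
          · exact ⟨hb'.symm, (melon_getVert_eq_y hM j (by omega)).mp hy'⟩
          · exfalso
            have := (melon_getVert_eq_y hM j hk.le).mp hy'
            omega
        have hfb' : f b = k % 2 := hf b j k hby hk.le hbk.symm
        have hLj2 : (P j).length = 2 := by
          apply h2
          rw [Nat.even_iff]
          omega
        have hk1 : k = 1 := by omega
        rw [hk1] at hbk
        obtain ⟨j', k', hk', hor'⟩ := melon_edge_loc hM hab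
        have hbsup : b ∈ (P j').support := by
          rcases hor' with ⟨-, hb'⟩ | ⟨hb', -⟩
          · rw [← hb']; exact walk_getVert_mem_support _ (by omega)
          · rw [← hb']; exact walk_getVert_mem_support _ hk'.le
        have hjj : j' = j := by
          apply melon_internal_unique hM (i := j) (k := 1) (by omega) (by omega)
          rw [← hbk]; exact hbsup
        rw [hjj] at hor' hk'
        have hax : a = x := by
          rcases hor' with ⟨ha', hb'⟩ | ⟨hb', ha'⟩
          · have hkk : k' + 1 = 1 :=
              walk_getVert_inj (P j) (hM.isPath j) (k'+1) 1 (by omega) (by omega)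
                (hb'.trans hbk)
            rw [← ha', show k' = 0 from by omega, Walk.getVert_zero]
          · exfalso
            have hkk : k' = 1 :=
              walk_getVert_inj (P j) (hM.isPath j) k' 1 (by omega) (by omega)
                (hb'.trans hbk)
            have hay : a = y := by
              rw [← ha', show k' + 1 = (P j).length from by omega, Walk.getVert_length]
            rw [hay, hfy] at hab'
            omega
        rw [hax, hfx]
        exact ⟨hxy, by rw [hfy]; omega⟩
end

section
/- For k ≥ 2, let P be the path with vertex sequence c_1, c_2, …, c_{2k}. Let u be the word c_4 c_3 c_6 c_5 ⋯ c_{2k−2} c_{2k−3} (the concatenation of the blocks c_{2i} c_{2i−1} for i = 2, …, k−1 in increasing order of i) and let v be the word c_{2k−2} c_{2k−1} c_{2k−4} c_{2k−3} ⋯ c_2 c_3 (the concatenation of the blocks c_{2j} c_{2j+1} for j = k−1 down to 1). Then p = c_2 c_1 u c_{2k} c_{2k−1} and q = c_{2k} v c_1 are each permutations of the vertex set of P, and the concatenation p q represents P. -/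
open SimpleGraph

variable {V : Type*}

namespace PathTwoPerm
open List

theorem flatMap_range_eq_single {α : Type*} (g : ℕ → List α) (j k : ℕ) (hj : j < k)
    (hg : ∀ i < k, i ≠ j → g i = []) :
    (List.range k).flatMap g = g j := by
  induction k with
  | zero => omega
  | succ m ih =>
    rw [List.range_succ, List.flatMap_append, List.flatMap_cons, List.flatMap_nil,
      List.append_nil]
    by_cases hm : m = j
    · subst hm
      have h0 : (List.range m).flatMap g = [] := by
        apply List.flatMap_eq_nil_iff.mpr
        intro i hi
        exact hg i (by simp at hi; omega) (by simp at hi; omega)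
      rw [h0, List.nil_append]
    · rw [hg m (by omega) hm, List.append_nil]
      exact ih (by omega) (fun i hi hij => hg i (by omega) hij)

theorem flatMap_range_eq_pair {α : Type*} (g : ℕ → List α) (j1 j2 k : ℕ) (h12 : j1 < j2)
    (h2 : j2 < k) (hg : ∀ i < k, i ≠ j1 → i ≠ j2 → g i = []) :
    (List.range k).flatMap g = g j1 ++ g j2 := by
  induction k with
  | zero => omega
  | succ m ih =>
    rw [List.range_succ, List.flatMap_append, List.flatMap_cons, List.flatMap_nil,
      List.append_nil]
    by_cases hm : m = j2
    · subst hm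
      rw [flatMap_range_eq_single g j1 _ h12 (fun i hi hij => hg i (by omega) hij (by omega))]
    · rw [hg m (by omega) (by omega) hm, List.append_nil]
      exact ih (by omega) (fun i hi h1 h2' => hg i (by omega) h1 h2')

theorem filter_two {α : Type*} (p : α → Bool) (u v : α) :
    [u, v].filter p = (if p u then [u] else []) ++ (if p v then [v] else []) := by
  simp only [List.filter_cons, List.filter_nil]
  split <;> split <;> simp

def Pw (k : ℕ) : List ℕ :=
  [2, 1] ++ ((List.range (k - 2)).map fun t => [2 * (t + 2), 2 * (t + 2) - 1]).flatten ++
    [2 * k, 2 * k - 1]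

def Qw (k : ℕ) : List ℕ :=
  [2 * k] ++ ((List.range (k - 1)).map fun t => [2 * (k - 1 - t), 2 * (k - 1 - t) + 1]).flatten ++
    [1]

theorem Pw_eq (k : ℕ) (hk : 2 ≤ k) :
    Pw k = (List.range k).flatMap fun j => [2 * j + 2, 2 * j + 1] := by
  obtain ⟨m, rfl⟩ : ∃ m, k = m + 2 := ⟨k - 2, by omega⟩
  rw [Pw, show m + 2 - 2 = m from rfl, ← List.flatMap_def]
  rw [List.range_succ, List.range_succ_eq_map, List.flatMap_append, List.flatMap_cons,
    List.flatMap_map, List.flatMap_cons, List.flatMap_nil, List.append_nil]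
  have h1 : (List.range m).flatMap (fun t => [2 * (t + 2), 2 * (t + 2) - 1]) =
      (List.range m).flatMap (fun t => [2 * (t + 1) + 2, 2 * (t + 1) + 1]) := by
    congr 1
  rw [h1]
  have e1 : 2 * (m + 2) - 1 = 2 * (m + 1) + 1 := by omega
  have e2 : 2 * (m + 2) = 2 * (m + 1) + 2 := by omega
  simp [e1, e2, Nat.succ_eq_add_one]

theorem Qw_eq (k : ℕ) :
    Qw k = [2 * k] ++
      ((List.range (k - 1)).flatMap fun t => [2 * (k - 1 - t), 2 * (k - 1 - t) + 1]) ++ [1] := by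
  rw [Qw, List.flatMap_def]

theorem mem_Pw {k m : ℕ} (hk : 2 ≤ k) (hm : m ∈ Pw k) : 1 ≤ m ∧ m ≤ 2 * k := by
  rw [Pw_eq k hk] at hm
  simp only [List.mem_flatMap, List.mem_range, List.mem_cons, List.not_mem_nil, or_false] at hm
  obtain ⟨j, hj, h⟩ := hm
  omega

theorem mem_Qw {k m : ℕ} (hk : 2 ≤ k) (hm : m ∈ Qw k) : 1 ≤ m ∧ m ≤ 2 * k := by
  rw [Qw_eq] at hm
  simp only [List.mem_append, List.mem_flatMap, List.mem_range, List.mem_cons,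
    List.not_mem_nil, or_false] at hm
  rcases hm with (h | ⟨t, ht, h⟩) | h <;> omega

end PathTwoPerm

namespace PathTwoPerm
open List

theorem filter_one {α : Type*} (p : α → Bool) (u : α) :
    [u].filter p = if p u then [u] else [] := by
  simp only [List.filter_cons, List.filter_nil]

theorem filter_Pw {k a b : ℕ} (hk : 2 ≤ k) (ha : 1 ≤ a) (hab : a < b) (hb : b ≤ 2 * k) :
    (Pw k).filter (fun m => decide (m = a ∨ m = b)) =
      if b = a + 1 ∧ a % 2 = 1 then [b, a] else [a, b] := by
  rw [Pw_eq k hk, List.filter_flatMap]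
  by_cases hsame : (a - 1) / 2 = (b - 1) / 2
  · have key : ((List.range k).flatMap fun j =>
        List.filter (fun m => decide (m = a ∨ m = b)) [2 * j + 2, 2 * j + 1]) =
        List.filter (fun m => decide (m = a ∨ m = b))
          [2 * ((a - 1) / 2) + 2, 2 * ((a - 1) / 2) + 1] :=
      flatMap_range_eq_single _ _ _ (by omega) (by
        intro i hi hij
        rw [filter_two, if_neg (by simp only [decide_eq_true_eq]; omega),
          if_neg (by simp only [decide_eq_true_eq]; omega)]
        rfl)
    rw [key, if_pos (by omega : b = a + 1 ∧ a % 2 = 1), filter_two,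
      if_pos (by simp only [decide_eq_true_eq]; omega),
      if_pos (by simp only [decide_eq_true_eq]; omega)]
    have e1 : 2 * ((a - 1) / 2) + 2 = b := by omega
    have e2 : 2 * ((a - 1) / 2) + 1 = a := by omega
    rw [e1, e2]
    rfl
  · have key : ((List.range k).flatMap fun j =>
        List.filter (fun m => decide (m = a ∨ m = b)) [2 * j + 2, 2 * j + 1]) =
        List.filter (fun m => decide (m = a ∨ m = b))
          [2 * ((a - 1) / 2) + 2, 2 * ((a - 1) / 2) + 1] ++
        List.filter (fun m => decide (m = a ∨ m = b))
          [2 * ((b - 1) / 2) + 2, 2 * ((b - 1) / 2) + 1] :=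
      flatMap_range_eq_pair _ _ _ _ (by omega) (by omega) (by
        intro i hi h1 h2
        rw [filter_two, if_neg (by simp only [decide_eq_true_eq]; omega),
          if_neg (by simp only [decide_eq_true_eq]; omega)]
        rfl)
    have hga : List.filter (fun m => decide (m = a ∨ m = b))
        [2 * ((a - 1) / 2) + 2, 2 * ((a - 1) / 2) + 1] = [a] := by
      by_cases hpa : a % 2 = 0
      · rw [filter_two, if_pos (by simp only [decide_eq_true_eq]; omega),
          if_neg (by simp only [decide_eq_true_eq]; omega)]
        have e : 2 * ((a - 1) / 2) + 2 = a := by omega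
        rw [e]; simp
      · rw [filter_two, if_neg (by simp only [decide_eq_true_eq]; omega),
          if_pos (by simp only [decide_eq_true_eq]; omega)]
        have e : 2 * ((a - 1) / 2) + 1 = a := by omega
        rw [e]
        rfl
    have hgb : List.filter (fun m => decide (m = a ∨ m = b))
        [2 * ((b - 1) / 2) + 2, 2 * ((b - 1) / 2) + 1] = [b] := by
      by_cases hpb : b % 2 = 0
      · rw [filter_two, if_pos (by simp only [decide_eq_true_eq]; omega),
          if_neg (by simp only [decide_eq_true_eq]; omega)]
        have e : 2 * ((b - 1) / 2) + 2 = b := by omega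
        rw [e]; simp
      · rw [filter_two, if_neg (by simp only [decide_eq_true_eq]; omega),
          if_pos (by simp only [decide_eq_true_eq]; omega)]
        have e : 2 * ((b - 1) / 2) + 1 = b := by omega
        rw [e]
        rfl
    rw [key, hga, hgb, if_neg (by omega)]
    rfl

theorem count_Pw {k m : ℕ} (hk : 2 ≤ k) (h1 : 1 ≤ m) (h2 : m ≤ 2 * k) :
    (Pw k).count m = 1 := by
  rw [List.count_eq_countP, List.countP_eq_length_filter, Pw_eq k hk, List.filter_flatMap]
  have key : ((List.range k).flatMap fun j =>
      List.filter (fun x => x == m) [2 * j + 2, 2 * j + 1]) =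
      List.filter (fun x => x == m) [2 * ((m - 1) / 2) + 2, 2 * ((m - 1) / 2) + 1] :=
    flatMap_range_eq_single _ _ _ (by omega) (by
      intro i hi hij
      rw [filter_two, if_neg (by simp only [beq_iff_eq]; omega),
        if_neg (by simp only [beq_iff_eq]; omega)]
      rfl)
  rw [key]
  by_cases hp : m % 2 = 0
  · rw [filter_two, if_pos (by simp only [beq_iff_eq]; omega),
      if_neg (by simp only [beq_iff_eq]; omega)]
    rfl
  · rw [filter_two, if_neg (by simp only [beq_iff_eq]; omega),
      if_pos (by simp only [beq_iff_eq]; omega)]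
    rfl

end PathTwoPerm

namespace PathTwoPerm
open List

theorem filter_Qw {k a b : ℕ} (hk : 2 ≤ k) (ha : 1 ≤ a) (hab : a < b) (hb : b ≤ 2 * k) :
    (Qw k).filter (fun m => decide (m = a ∨ m = b)) =
      if b = a + 1 ∧ a % 2 = 0 then [a, b] else [b, a] := by
  rw [Qw_eq, List.filter_append, List.filter_append, List.filter_flatMap, filter_one, filter_one]
  by_cases hb2k : b = 2 * k
  · rw [if_pos (by simp only [decide_eq_true_eq]; omega)]
    by_cases ha1 : a = 1
    · have hnil : ((List.range (k - 1)).flatMap fun t =>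
          List.filter (fun m => decide (m = a ∨ m = b))
            [2 * (k - 1 - t), 2 * (k - 1 - t) + 1]) = [] := by
        apply List.flatMap_eq_nil_iff.mpr
        intro i hi
        simp only [List.mem_range] at hi
        rw [filter_two, if_neg (by simp only [decide_eq_true_eq]; omega),
          if_neg (by simp only [decide_eq_true_eq]; omega)]
        rfl
      rw [hnil, if_pos (by simp only [decide_eq_true_eq]; omega), if_neg (by omega)]
      rw [ha1, hb2k]
      rfl
    · -- 2 ≤ a ≤ 2k-1
      have key : ((List.range (k - 1)).flatMap fun t =>
          List.filter (fun m => decide (m = a ∨ m = b))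
            [2 * (k - 1 - t), 2 * (k - 1 - t) + 1]) =
          List.filter (fun m => decide (m = a ∨ m = b))
            [2 * (k - 1 - (k - 1 - a / 2)), 2 * (k - 1 - (k - 1 - a / 2)) + 1] :=
        flatMap_range_eq_single _ _ _ (by omega) (by
          intro i hi hij
          rw [filter_two, if_neg (by simp only [decide_eq_true_eq]; omega),
            if_neg (by simp only [decide_eq_true_eq]; omega)]
          rfl)
      have hga : List.filter (fun m => decide (m = a ∨ m = b))
          [2 * (k - 1 - (k - 1 - a / 2)), 2 * (k - 1 - (k - 1 - a / 2)) + 1] = [a] := by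
        by_cases hpa : a % 2 = 0
        · rw [filter_two, if_pos (by simp only [decide_eq_true_eq]; omega),
            if_neg (by simp only [decide_eq_true_eq]; omega)]
          have e : 2 * (k - 1 - (k - 1 - a / 2)) = a := by omega
          rw [e]; simp
        · rw [filter_two, if_neg (by simp only [decide_eq_true_eq]; omega),
            if_pos (by simp only [decide_eq_true_eq]; omega)]
          have e : 2 * (k - 1 - (k - 1 - a / 2)) + 1 = a := by omega
          rw [e]
          rfl
      rw [key, hga, if_neg (by simp only [decide_eq_true_eq]; omega), if_neg (by omega), hb2k]
      rfl
  · -- b ≤ 2k - 1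
    rw [if_neg (by simp only [decide_eq_true_eq]; omega)]
    by_cases ha1 : a = 1
    · have key : ((List.range (k - 1)).flatMap fun t =>
          List.filter (fun m => decide (m = a ∨ m = b))
            [2 * (k - 1 - t), 2 * (k - 1 - t) + 1]) =
          List.filter (fun m => decide (m = a ∨ m = b))
            [2 * (k - 1 - (k - 1 - b / 2)), 2 * (k - 1 - (k - 1 - b / 2)) + 1] :=
        flatMap_range_eq_single _ _ _ (by omega) (by
          intro i hi hij
          rw [filter_two, if_neg (by simp only [decide_eq_true_eq]; omega),
            if_neg (by simp only [decide_eq_true_eq]; omega)]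
          rfl)
      have hgb : List.filter (fun m => decide (m = a ∨ m = b))
          [2 * (k - 1 - (k - 1 - b / 2)), 2 * (k - 1 - (k - 1 - b / 2)) + 1] = [b] := by
        by_cases hpb : b % 2 = 0
        · rw [filter_two, if_pos (by simp only [decide_eq_true_eq]; omega),
            if_neg (by simp only [decide_eq_true_eq]; omega)]
          have e : 2 * (k - 1 - (k - 1 - b / 2)) = b := by omega
          rw [e]; simp
        · rw [filter_two, if_neg (by simp only [decide_eq_true_eq]; omega),
            if_pos (by simp only [decide_eq_true_eq]; omega)]
          have e : 2 * (k - 1 - (k - 1 - b / 2)) + 1 = b := by omega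
          rw [e]
          rfl
      rw [key, hgb, if_pos (by simp only [decide_eq_true_eq]; omega), if_neg (by omega), ha1]
      rfl
    · -- 2 ≤ a < b ≤ 2k-1
      rw [if_neg (by simp only [decide_eq_true_eq]; omega)]
      by_cases hsame : a / 2 = b / 2
      · have key : ((List.range (k - 1)).flatMap fun t =>
            List.filter (fun m => decide (m = a ∨ m = b))
              [2 * (k - 1 - t), 2 * (k - 1 - t) + 1]) =
            List.filter (fun m => decide (m = a ∨ m = b))
              [2 * (k - 1 - (k - 1 - a / 2)), 2 * (k - 1 - (k - 1 - a / 2)) + 1] :=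
          flatMap_range_eq_single _ _ _ (by omega) (by
            intro i hi hij
            rw [filter_two, if_neg (by simp only [decide_eq_true_eq]; omega),
              if_neg (by simp only [decide_eq_true_eq]; omega)]
            rfl)
        rw [key, filter_two, if_pos (by simp only [decide_eq_true_eq]; omega),
          if_pos (by simp only [decide_eq_true_eq]; omega), if_pos (by omega : b = a + 1 ∧ a % 2 = 0)]
        have e1 : 2 * (k - 1 - (k - 1 - a / 2)) = a := by omega
        rw [e1]
        simp [show b = a + 1 from by omega]
      · have key : ((List.range (k - 1)).flatMap fun t =>
            List.filter (fun m => decide (m = a ∨ m = b))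
              [2 * (k - 1 - t), 2 * (k - 1 - t) + 1]) =
            List.filter (fun m => decide (m = a ∨ m = b))
              [2 * (k - 1 - (k - 1 - b / 2)), 2 * (k - 1 - (k - 1 - b / 2)) + 1] ++
            List.filter (fun m => decide (m = a ∨ m = b))
              [2 * (k - 1 - (k - 1 - a / 2)), 2 * (k - 1 - (k - 1 - a / 2)) + 1] :=
          flatMap_range_eq_pair _ _ _ _ (by omega) (by omega) (by
            intro i hi h1 h2
            rw [filter_two, if_neg (by simp only [decide_eq_true_eq]; omega),
              if_neg (by simp only [decide_eq_true_eq]; omega)]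
            rfl)
        have hgb : List.filter (fun m => decide (m = a ∨ m = b))
            [2 * (k - 1 - (k - 1 - b / 2)), 2 * (k - 1 - (k - 1 - b / 2)) + 1] = [b] := by
          by_cases hpb : b % 2 = 0
          · rw [filter_two, if_pos (by simp only [decide_eq_true_eq]; omega),
              if_neg (by simp only [decide_eq_true_eq]; omega)]
            have e : 2 * (k - 1 - (k - 1 - b / 2)) = b := by omega
            rw [e]; simp
          · rw [filter_two, if_neg (by simp only [decide_eq_true_eq]; omega),
              if_pos (by simp only [decide_eq_true_eq]; omega)]
            have e : 2 * (k - 1 - (k - 1 - b / 2)) + 1 = b := by omega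
            rw [e]
            rfl
        have hga : List.filter (fun m => decide (m = a ∨ m = b))
            [2 * (k - 1 - (k - 1 - a / 2)), 2 * (k - 1 - (k - 1 - a / 2)) + 1] = [a] := by
          by_cases hpa : a % 2 = 0
          · rw [filter_two, if_pos (by simp only [decide_eq_true_eq]; omega),
              if_neg (by simp only [decide_eq_true_eq]; omega)]
            have e : 2 * (k - 1 - (k - 1 - a / 2)) = a := by omega
            rw [e]; simp
          · rw [filter_two, if_neg (by simp only [decide_eq_true_eq]; omega),
              if_pos (by simp only [decide_eq_true_eq]; omega)]
            have e : 2 * (k - 1 - (k - 1 - a / 2)) + 1 = a := by omega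
            rw [e]
            rfl
        rw [key, hgb, hga, if_neg (by omega)]
        rfl

theorem count_Qw {k m : ℕ} (hk : 2 ≤ k) (h1 : 1 ≤ m) (h2 : m ≤ 2 * k) :
    (Qw k).count m = 1 := by
  rw [List.count_eq_countP, List.countP_eq_length_filter, Qw_eq, List.filter_append,
    List.filter_append, List.filter_flatMap, filter_one, filter_one]
  by_cases hm2k : m = 2 * k
  · rw [if_pos (by simp only [beq_iff_eq]; omega), if_neg (by simp only [beq_iff_eq]; omega)]
    have hnil : ((List.range (k - 1)).flatMap fun t =>
        List.filter (fun x => x == m) [2 * (k - 1 - t), 2 * (k - 1 - t) + 1]) = [] := by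
      apply List.flatMap_eq_nil_iff.mpr
      intro i hi
      simp only [List.mem_range] at hi
      rw [filter_two, if_neg (by simp only [beq_iff_eq]; omega),
        if_neg (by simp only [beq_iff_eq]; omega)]
      rfl
    rw [hnil]
    rfl
  · by_cases hm1 : m = 1
    · rw [if_neg (by simp only [beq_iff_eq]; omega), if_pos (by simp only [beq_iff_eq]; omega)]
      have hnil : ((List.range (k - 1)).flatMap fun t =>
          List.filter (fun x => x == m) [2 * (k - 1 - t), 2 * (k - 1 - t) + 1]) = [] := by
        apply List.flatMap_eq_nil_iff.mpr
        intro i hi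
        simp only [List.mem_range] at hi
        rw [filter_two, if_neg (by simp only [beq_iff_eq]; omega),
          if_neg (by simp only [beq_iff_eq]; omega)]
        rfl
      rw [hnil]
      rfl
    · rw [if_neg (by simp only [beq_iff_eq]; omega), if_neg (by simp only [beq_iff_eq]; omega)]
      have key : ((List.range (k - 1)).flatMap fun t =>
          List.filter (fun x => x == m) [2 * (k - 1 - t), 2 * (k - 1 - t) + 1]) =
          List.filter (fun x => x == m)
            [2 * (k - 1 - (k - 1 - m / 2)), 2 * (k - 1 - (k - 1 - m / 2)) + 1] :=
        flatMap_range_eq_single _ _ _ (by omega) (by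
          intro i hi hij
          rw [filter_two, if_neg (by simp only [beq_iff_eq]; omega),
            if_neg (by simp only [beq_iff_eq]; omega)]
          rfl)
      rw [key]
      by_cases hp : m % 2 = 0
      · rw [filter_two, if_pos (by simp only [beq_iff_eq]; omega),
          if_neg (by simp only [beq_iff_eq]; omega)]
        rfl
      · rw [filter_two, if_neg (by simp only [beq_iff_eq]; omega),
          if_pos (by simp only [beq_iff_eq]; omega)]
        rfl

end PathTwoPerm

/-- For `k ≥ 2`, the words `p = c₂ c₁ u c₂ₖ c₂ₖ₋₁` and `q = c₂ₖ v c₁` are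
permutations of the vertices of the path `c₁ c₂ ⋯ c₂ₖ`, and their concatenation
`p q` represents that path. -/
theorem path_two_permutation_representation (k : ℕ) (hk : 2 ≤ k)
    (c : ℕ → Fin (2 * k)) (hc : ∀ i, 1 ≤ i → i ≤ 2 * k → (c i).val = i - 1) :
    (∀ z, ([c 2, c 1] ++
        ((List.range (k - 2)).map fun t =>
          [c (2 * (t + 2)), c (2 * (t + 2) - 1)]).flatten ++
        [c (2 * k), c (2 * k - 1)]).count z = 1) ∧
    (∀ z, ([c (2 * k)] ++
        ((List.range (k - 1)).map fun t =>
          [c (2 * (k - 1 - t)), c (2 * (k - 1 - t) + 1)]).flatten ++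
        [c 1]).count z = 1) ∧
    Represents (SimpleGraph.pathGraph (2 * k))
      (([c 2, c 1] ++
        ((List.range (k - 2)).map fun t =>
          [c (2 * (t + 2)), c (2 * (t + 2) - 1)]).flatten ++
        [c (2 * k), c (2 * k - 1)]) ++
       ([c (2 * k)] ++
        ((List.range (k - 1)).map fun t =>
          [c (2 * (k - 1 - t)), c (2 * (k - 1 - t) + 1)]).flatten ++
        [c 1])) := by
  classical
  have hpmap : ([c 2, c 1] ++
      ((List.range (k - 2)).map fun t => [c (2 * (t + 2)), c (2 * (t + 2) - 1)]).flatten ++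
      [c (2 * k), c (2 * k - 1)]) = (PathTwoPerm.Pw k).map c := by
    rw [PathTwoPerm.Pw]
    simp only [List.map_append, List.map_cons, List.map_nil, List.map_flatten, List.map_map,
      Function.comp_def]
  have hqmap : ([c (2 * k)] ++
      ((List.range (k - 1)).map fun t => [c (2 * (k - 1 - t)), c (2 * (k - 1 - t) + 1)]).flatten ++
      [c 1]) = (PathTwoPerm.Qw k).map c := by
    rw [PathTwoPerm.Qw]
    simp only [List.map_append, List.map_cons, List.map_nil, List.map_flatten, List.map_map,
      Function.comp_def]
  have hcz : ∀ (z : Fin (2 * k)) (m : ℕ), 1 ≤ m → m ≤ 2 * k → (c m = z ↔ m = z.val + 1) := by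
    intro z m h1 h2
    have hz := z.isLt
    constructor
    · intro h
      have h3 := hc m h1 h2
      rw [h] at h3
      omega
    · rintro rfl
      apply Fin.ext
      rw [hc _ (by omega) (by omega)]
      omega
  have hcount : ∀ L : List ℕ, (∀ m ∈ L, 1 ≤ m ∧ m ≤ 2 * k) →
      ∀ z : Fin (2 * k), (L.map c).count z = L.count (z.val + 1) := by
    intro L hL z
    rw [List.count_eq_countP, List.countP_map, List.count_eq_countP]
    apply List.countP_congr
    intro x hx
    obtain ⟨hx1, hx2⟩ := hL x hx
    simp only [Function.comp_apply, beq_iff_eq]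
    exact hcz z x hx1 hx2
  refine ⟨?_, ?_, ?_, ?_⟩
  · intro z
    rw [hpmap, hcount _ (fun m hm => PathTwoPerm.mem_Pw hk hm) z]
    exact PathTwoPerm.count_Pw hk (by omega) (by have := z.isLt; omega)
  · intro z
    rw [hqmap, hcount _ (fun m hm => PathTwoPerm.mem_Qw hk hm) z]
    exact PathTwoPerm.count_Qw hk (by omega) (by have := z.isLt; omega)
  · intro v
    rw [hpmap, hqmap]
    apply List.mem_append_left
    have h1 : ((PathTwoPerm.Pw k).map c).count v = 1 := by
      rw [hcount _ (fun m hm => PathTwoPerm.mem_Pw hk hm) v]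
      exact PathTwoPerm.count_Pw hk (by omega) (by have := v.isLt; omega)
    exact List.count_pos_iff.mp (by rw [h1]; norm_num)
  · intro a b hab
    rw [hpmap, hqmap, ← List.map_append]
    unfold Alternates
    rw [List.filter_map]
    have main : ∀ x y : Fin (2 * k), x.val < y.val →
        ((SimpleGraph.pathGraph (2 * k)).Adj x y ↔
          List.Chain' (· ≠ ·) ((((PathTwoPerm.Pw k) ++ (PathTwoPerm.Qw k)).filter
            ((fun v => decide (v = x ∨ v = y)) ∘ c)).map c)) := by
      intro x y hxy
      have hx := x.isLt
      have hy := y.isLt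
      have hfil : ((PathTwoPerm.Pw k) ++ (PathTwoPerm.Qw k)).filter
          ((fun v => decide (v = x ∨ v = y)) ∘ c) =
          ((PathTwoPerm.Pw k) ++ (PathTwoPerm.Qw k)).filter
            (fun m => decide (m = x.val + 1 ∨ m = y.val + 1)) := by
        apply List.filter_congr
        intro m hm
        have hb : 1 ≤ m ∧ m ≤ 2 * k := by
          rcases List.mem_append.mp hm with h | h
          exacts [PathTwoPerm.mem_Pw hk h, PathTwoPerm.mem_Qw hk h]
        simp only [Function.comp_apply]
        rw [decide_eq_decide]
        exact or_congr (hcz x m hb.1 hb.2) (hcz y m hb.1 hb.2)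
      rw [hfil, List.filter_append,
        PathTwoPerm.filter_Pw hk (by omega) (by omega) (by omega),
        PathTwoPerm.filter_Qw hk (by omega) (by omega) (by omega),
        SimpleGraph.pathGraph_adj]
      have hne : c (x.val + 1) ≠ c (y.val + 1) := by
        intro h
        have h1 := hc (x.val + 1) (by omega) (by omega)
        have h2 := hc (y.val + 1) (by omega) (by omega)
        rw [h] at h1
        omega
      by_cases hadj : y.val + 1 = (x.val + 1) + 1
      · by_cases hpx : (x.val + 1) % 2 = 1
        · rw [if_pos ⟨hadj, hpx⟩, if_neg (by omega)]
          constructor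
          · intro _
            simp only [List.cons_append, List.nil_append, List.map_cons, List.map_nil,
              List.Chain', List.isChain_cons_cons, List.isChain_singleton, and_true]
            exact ⟨hne.symm, hne, hne.symm⟩
          · intro _
            left
            omega
        · rw [if_neg (by omega), if_pos ⟨hadj, by omega⟩]
          constructor
          · intro _
            simp only [List.cons_append, List.nil_append, List.map_cons, List.map_nil,
              List.Chain', List.isChain_cons_cons, List.isChain_singleton, and_true]
            exact ⟨hne, hne.symm, hne⟩
          · intro _
            left
            omega
      · rw [if_neg (by omega), if_neg (by omega)]
        constructor
        · intro h
          rcases h with h | h <;> omega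
        · intro h
          exfalso
          simp only [List.cons_append, List.nil_append, List.map_cons, List.map_nil,
            List.Chain', List.isChain_cons_cons, List.isChain_singleton, and_true] at h
          exact h.2.1 rfl
    rcases Nat.lt_trichotomy a.val b.val with h | h | h
    · exact main a b h
    · exact absurd (Fin.ext h) hab
    · have hsw : (((PathTwoPerm.Pw k) ++ (PathTwoPerm.Qw k)).filter
          ((fun v => decide (v = a ∨ v = b)) ∘ c)) =
          (((PathTwoPerm.Pw k) ++ (PathTwoPerm.Qw k)).filter
            ((fun v => decide (v = b ∨ v = a)) ∘ c)) := by
        apply List.filter_congr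
        intro m _
        simp only [Function.comp_apply]
        rw [decide_eq_decide]
        exact or_comm
      rw [hsw, SimpleGraph.adj_comm]
      exact main b a h
end

section
/- For k ≥ 2, let C be the even cycle on the 2k+2 vertices 0′, c_1, c_2, …, c_{2k}, 0, consisting of the path 0′, c_1, …, c_{2k}, 0 together with the edge {0, 0′}. Let u be the word c_4 c_3 c_6 c_5 ⋯ c_{2k−2} c_{2k−3} (the concatenation of the blocks c_{2i} c_{2i−1} for i = 2, …, k−1 in increasing order of i) and let v be the word c_{2k−2} c_{2k−1} c_{2k−4} c_{2k−3} ⋯ c_2 c_3 (the concatenation of the blocks c_{2j} c_{2j+1} for j = k−1 down to 1). Then w_1 = 0′ c_2 c_1 u c_{2k} c_{2k−1} 0, w_2 = c_{2k} v 0′ c_1 0, and w_3 = 0′ c_{2k} 0 v c_1 are each permutations of the vertex set of C, and the concatenation w_1 w_2 w_3 represents C. -/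
open SimpleGraph

variable {V : Type*}

section EvenCycleAux



lemma filter_range_two (i j n : ℕ) (hij : i < j) :
    (List.range n).filter (fun s => decide (s = i ∨ s = j)) =
      (if i < n then [i] else []) ++ (if j < n then [j] else []) := by
  induction n with
  | zero => simp
  | succ n ih =>
    rw [List.range_succ, List.filter_append, ih]
    by_cases h1 : n = i <;> by_cases h2 : n = j <;>
      simp_all [List.filter_cons] <;> split_ifs <;> simp_all <;> omega

lemma flatten_pairs (f g : ℕ → V) (n : ℕ) :
    ((List.range n).map fun t => [f t, g t]).flatten =
      (List.range (2 * n)).map fun s => if s % 2 = 0 then f (s / 2) else g (s / 2) := by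
  induction n with
  | zero => simp
  | succ n ih =>
    rw [List.range_succ, List.map_append, List.flatten_append, ih,
      show 2 * (n + 1) = (2 * n + 1) + 1 by ring, List.range_succ, List.range_succ]
    simp only [List.map_append, List.append_assoc]
    congr 1
    simp only [List.map_cons, List.map_nil, List.flatten_cons, List.flatten_nil]
    have h1 : (2 * n) % 2 = 0 := by omega
    have h2 : (2 * n + 1) % 2 = 1 := by omega
    have h3 : (2 * n) / 2 = n := by omega
    have h4 : (2 * n + 1) / 2 = n := by omega
    simp [h1, h2, h3, h4]

lemma chain'_three_pairs {a b : V} (hab : a ≠ b)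
    (o1 o2 o3 : Prop) [Decidable o1] [Decidable o2] [Decidable o3] :
    (((if o1 then [a,b] else [b,a]) ++ (if o2 then [a,b] else [b,a])) ++
      (if o3 then [a,b] else [b,a])).Chain' (· ≠ ·) ↔ ((o1 ↔ o2) ∧ (o2 ↔ o3)) := by
  split_ifs <;> simp_all [List.Chain', List.isChain_cons_cons, ne_comm] <;> tauto

lemma filter_map_range [DecidableEq V] (F : ℕ → V) (n : ℕ)
    (hinj : ∀ s < n, ∀ t < n, F s = F t → s = t)
    (a b : V) (pa pb : ℕ) (hpa : pa < n) (hpb : pb < n)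
    (ha : F pa = a) (hb : F pb = b) (hab : pa ≠ pb) :
    ((List.range n).map F).filter (fun x => decide (x = a ∨ x = b)) =
      if pa < pb then [a, b] else [b, a] := by
  rw [List.filter_map]
  have hcong : ∀ s ∈ List.range n,
      (fun x => decide (x = a ∨ x = b)) (F s) = decide (s = pa ∨ s = pb) := by
    intro s hs
    simp only [List.mem_range] at hs
    simp only [decide_eq_decide]
    constructor
    · rintro (h | h)
      · exact Or.inl (hinj s hs pa hpa (h.trans ha.symm))
      · exact Or.inr (hinj s hs pb hpb (h.trans hb.symm))
    · rintro (rfl | rfl) <;> simp [ha, hb]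
  rw [show ((fun x => decide (x = a ∨ x = b)) ∘ F) =
      (fun s => (fun x => decide (x = a ∨ x = b)) (F s)) from rfl,
    List.filter_congr hcong]
  rcases lt_or_gt_of_ne hab with h | h
  · rw [filter_range_two pa pb n h, if_pos hpa, if_pos hpb, if_pos h]
    simp [ha, hb]
  · have : (fun s => decide (s = pa ∨ s = pb)) = (fun s => decide (s = pb ∨ s = pa)) := by
      funext s; simp [or_comm]
    rw [this, filter_range_two pb pa n h, if_pos hpb, if_pos hpa, if_neg (by omega)]
    simp [ha, hb]

lemma range_map_split (F : ℕ → V) (a b : ℕ) :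
    (List.range (a + b)).map F =
      (List.range a).map F ++ (List.range b).map (fun s => F (a + s)) := by
  rw [List.range_add, List.map_append, List.map_map]; rfl

lemma fin_sub_one_iff {n : ℕ} (u v : Fin (n + 2)) :
    u - v = 1 ↔ (u.val = v.val + 1 ∨ (v.val = n + 1 ∧ u.val = 0)) := by
  rw [sub_eq_iff_eq_add, Fin.ext_iff, Fin.val_add, Fin.val_one]
  rcases Nat.lt_or_ge v.val (n + 1) with h | h
  · rw [Nat.mod_eq_of_lt (by omega)]
    omega
  · have hv : v.val = n + 1 := by have := v.isLt; omega
    rw [hv, show 1 + (n + 1) = n + 2 by omega, Nat.mod_self]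
    omega



def sig1 (k s : ℕ) : ℕ :=
  if s = 0 then 0 else if s = 2*k+1 then 2*k+1 else if s % 2 = 1 then s+1 else s-1

def tau2 (k s : ℕ) : ℕ :=
  if s = 0 then 2*k else if s = 2*k-1 then 0 else if s = 2*k then 1 else
  if s = 2*k+1 then 2*k+1 else if s % 2 = 1 then 2*k-1-s else 2*k+1-s

def sig2 (k x : ℕ) : ℕ :=
  if x = 0 then 2*k-1 else if x = 1 then 2*k else if x = 2*k then 0 else
  if x = 2*k+1 then 2*k+1 else if x % 2 = 0 then 2*k-1-x else 2*k+1-x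

def tau3 (k s : ℕ) : ℕ :=
  if s = 0 then 0 else if s = 1 then 2*k else if s = 2 then 2*k+1 else
  if s = 2*k+1 then 1 else if s % 2 = 1 then 2*k+1-s else 2*k+3-s

def sig3 (k x : ℕ) : ℕ :=
  if x = 0 then 0 else if x = 1 then 2*k+1 else if x = 2*k then 1 else
  if x = 2*k+1 then 2 else if x % 2 = 0 then 2*k+1-x else 2*k+3-x

lemma sig1_inj {k : ℕ} : ∀ s, s < 2*k+2 → ∀ t, t < 2*k+2 →
    sig1 k s = sig1 k t → s = t := by
  intro s hs t ht h
  unfold sig1 at h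
  split_ifs at h <;> omega

lemma tau2_inj {k : ℕ} (hk : 2 ≤ k) : ∀ s, s < 2*k+2 → ∀ t, t < 2*k+2 →
    tau2 k s = tau2 k t → s = t := by
  intro s hs t ht h
  unfold tau2 at h
  split_ifs at h <;> omega

lemma tau3_inj {k : ℕ} (hk : 2 ≤ k) : ∀ s, s < 2*k+2 → ∀ t, t < 2*k+2 →
    tau3 k s = tau3 k t → s = t := by
  intro s hs t ht h
  unfold tau3 at h
  split_ifs at h <;> omega

lemma sig_cases {k : ℕ} (hk : 2 ≤ k) (x : ℕ) (hx : x < 2*k+2) :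
    (x = 0 ∧ sig1 k x = 0 ∧ sig2 k x = 2*k-1 ∧ sig3 k x = 0) ∨
    (x = 1 ∧ sig1 k x = 2 ∧ sig2 k x = 2*k ∧ sig3 k x = 2*k+1) ∨
    (x = 2*k ∧ sig1 k x = 2*k-1 ∧ sig2 k x = 0 ∧ sig3 k x = 1) ∨
    (x = 2*k+1 ∧ sig1 k x = 2*k+1 ∧ sig2 k x = 2*k+1 ∧ sig3 k x = 2) ∨
    (2 ≤ x ∧ x ≤ 2*k-1 ∧ x % 2 = 0 ∧ sig1 k x = x-1 ∧ sig2 k x = 2*k-1-x ∧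
      sig3 k x = 2*k+1-x) ∨
    (3 ≤ x ∧ x ≤ 2*k-1 ∧ x % 2 = 1 ∧ sig1 k x = x+1 ∧ sig2 k x = 2*k+1-x ∧
      sig3 k x = 2*k+3-x) := by
  have h6 : x = 0 ∨ x = 1 ∨ x = 2*k ∨ x = 2*k+1 ∨
      (2 ≤ x ∧ x ≤ 2*k-1 ∧ x % 2 = 0) ∨ (3 ≤ x ∧ x ≤ 2*k-1 ∧ x % 2 = 1) := by omega
  rcases h6 with h|h|h|h|h|h
  · exact Or.inl ⟨h, (by unfold sig1; split_ifs <;> omega), (by unfold sig2; split_ifs <;> omega), (by unfold sig3; split_ifs <;> omega)⟩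
  · exact Or.inr (Or.inl ⟨h, (by unfold sig1; split_ifs <;> omega), (by unfold sig2; split_ifs <;> omega), (by unfold sig3; split_ifs <;> omega)⟩)
  · exact Or.inr (Or.inr (Or.inl ⟨h, (by unfold sig1; split_ifs <;> omega), (by unfold sig2; split_ifs <;> omega), (by unfold sig3; split_ifs <;> omega)⟩))
  · exact Or.inr (Or.inr (Or.inr (Or.inl ⟨h, (by unfold sig1; split_ifs <;> omega), (by unfold sig2; split_ifs <;> omega), (by unfold sig3; split_ifs <;> omega)⟩)))
  · exact Or.inr (Or.inr (Or.inr (Or.inr (Or.inl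
      ⟨h.1, h.2.1, h.2.2, (by unfold sig1; split_ifs <;> omega), (by unfold sig2; split_ifs <;> omega), (by unfold sig3; split_ifs <;> omega)⟩))))
  · exact Or.inr (Or.inr (Or.inr (Or.inr (Or.inr
      ⟨h.1, h.2.1, h.2.2, (by unfold sig1; split_ifs <;> omega), (by unfold sig2; split_ifs <;> omega), (by unfold sig3; split_ifs <;> omega)⟩))))

lemma sig1_spec {k : ℕ} (hk : 2 ≤ k) : ∀ x, x < 2*k+2 →
    sig1 k x < 2*k+2 ∧ sig1 k (sig1 k x) = x := by
  intro x hx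
  rcases sig_cases hk x hx with ⟨h1,e1,-,-⟩|⟨h1,e1,-,-⟩|⟨h1,e1,-,-⟩|⟨h1,e1,-,-⟩|
    ⟨h1,h2,h3,e1,-,-⟩|⟨h1,h2,h3,e1,-,-⟩ <;>
    rw [e1] <;> refine ⟨by omega, ?_⟩ <;> unfold sig1 <;> split_ifs <;> first | omega | exact (by assumption : False).elim

lemma sig2_spec {k : ℕ} (hk : 2 ≤ k) : ∀ x, x < 2*k+2 →
    sig2 k x < 2*k+2 ∧ tau2 k (sig2 k x) = x := by
  intro x hx
  rcases sig_cases hk x hx with ⟨h1,-,e1,-⟩|⟨h1,-,e1,-⟩|⟨h1,-,e1,-⟩|⟨h1,-,e1,-⟩|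
    ⟨h1,h2,h3,-,e1,-⟩|⟨h1,h2,h3,-,e1,-⟩ <;>
    rw [e1] <;> refine ⟨by omega, ?_⟩ <;> unfold tau2 <;> split_ifs <;> first | omega | exact (by assumption : False).elim

lemma sig3_spec {k : ℕ} (hk : 2 ≤ k) : ∀ x, x < 2*k+2 →
    sig3 k x < 2*k+2 ∧ tau3 k (sig3 k x) = x := by
  intro x hx
  rcases sig_cases hk x hx with ⟨h1,-,-,e1⟩|⟨h1,-,-,e1⟩|⟨h1,-,-,e1⟩|⟨h1,-,-,e1⟩|
    ⟨h1,h2,h3,-,-,e1⟩|⟨h1,h2,h3,-,-,e1⟩ <;>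
    rw [e1] <;> refine ⟨by omega, ?_⟩ <;> unfold tau3 <;> split_ifs <;> first | omega | exact (by assumption : False).elim

lemma key_iff {k : ℕ} (hk : 2 ≤ k) (x y : ℕ) (hx : x < 2*k+2) (hy : y < 2*k+2)
    (hxy : x ≠ y) :
    ((x = y + 1 ∨ (y = 2*k+1 ∧ x = 0)) ∨ (y = x + 1 ∨ (x = 2*k+1 ∧ y = 0))) ↔
      ((sig1 k x < sig1 k y ↔ sig2 k x < sig2 k y) ∧
       (sig2 k x < sig2 k y ↔ sig3 k x < sig3 k y)) := by
  rcases sig_cases hk x hx with ⟨h1,e1,e2,e3⟩|⟨h1,e1,e2,e3⟩|⟨h1,e1,e2,e3⟩|⟨h1,e1,e2,e3⟩|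
    ⟨h1,h2,h3,e1,e2,e3⟩|⟨h1,h2,h3,e1,e2,e3⟩ <;>
  rcases sig_cases hk y hy with ⟨g1,f1,f2,f3⟩|⟨g1,f1,f2,f3⟩|⟨g1,f1,f2,f3⟩|⟨g1,f1,f2,f3⟩|
    ⟨g1,g2,g3,f1,f2,f3⟩|⟨g1,g2,g3,f1,f2,f3⟩ <;>
  rw [e1, e2, e3, f1, f2, f3] <;> omega

lemma hr3 : List.range 3 = [0, 1, 2] := by decide
lemma hr1 : List.range 1 = [0] := by decide

def W1F (k : ℕ) (z' z : V) (c : ℕ → V) : ℕ → V := fun s =>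
  if s = 0 then z' else if s = 2*k+1 then z else if s % 2 = 1 then c (s+1) else c (s-1)

def W2F (k : ℕ) (z' z : V) (c : ℕ → V) : ℕ → V := fun s =>
  if s = 0 then c (2*k) else if s = 2*k-1 then z' else if s = 2*k then c 1 else
  if s = 2*k+1 then z else if s % 2 = 1 then c (2*k-1-s) else c (2*k+1-s)

def W3F (k : ℕ) (z' z : V) (c : ℕ → V) : ℕ → V := fun s =>
  if s = 0 then z' else if s = 1 then c (2*k) else if s = 2 then z else
  if s = 2*k+1 then c 1 else if s % 2 = 1 then c (2*k+1-s) else c (2*k+3-s)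

lemma w1_eq (k : ℕ) (hk : 2 ≤ k) (z' z : V) (c : ℕ → V) :
    [z', c 2, c 1] ++
        ((List.range (k - 2)).map fun t =>
          [c (2 * (t + 2)), c (2 * (t + 2) - 1)]).flatten ++
        [c (2 * k), c (2 * k - 1), z] =
      (List.range (2*k+2)).map (W1F k z' z c) := by
  have h0 : W1F k z' z c 0 = z' := by unfold W1F; rw [if_pos rfl]
  have h1 : W1F k z' z c 1 = c 2 := by
    unfold W1F; rw [if_neg (by omega), if_neg (by omega), if_pos (by omega)]
  have h2 : W1F k z' z c 2 = c 1 := by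
    unfold W1F; rw [if_neg (by omega), if_neg (by omega), if_neg (by omega)]
  have t0 : W1F k z' z c (3 + (2*k-4) + 0) = c (2*k) := by
    unfold W1F; rw [if_neg (by omega), if_neg (by omega), if_pos (by omega)]
    congr 1; omega
  have t1 : W1F k z' z c (3 + (2*k-4) + 1) = c (2*k-1) := by
    unfold W1F; rw [if_neg (by omega), if_neg (by omega), if_neg (by omega)]
    congr 1; omega
  have t2 : W1F k z' z c (3 + (2*k-4) + 2) = z := by
    unfold W1F; rw [if_neg (by omega), if_pos (by omega)]
  have hMid : ((List.range (k - 2)).map fun t =>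
        [c (2 * (t + 2)), c (2 * (t + 2) - 1)]).flatten =
      (List.range (2*k-4)).map (fun s => W1F k z' z c (3 + s)) := by
    rw [flatten_pairs (fun t => c (2 * (t + 2))) (fun t => c (2 * (t + 2) - 1)),
      show 2 * (k - 2) = 2*k-4 by omega]
    refine List.map_congr_left ?_
    intro s hs
    rw [List.mem_range] at hs
    by_cases hp : s % 2 = 0
    · rw [if_pos hp]
      unfold W1F
      rw [if_neg (by omega), if_neg (by omega), if_pos (by omega)]
      congr 1; omega
    · rw [if_neg hp]
      unfold W1F
      rw [if_neg (by omega), if_neg (by omega), if_neg (by omega)]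
      congr 1; omega
  rw [show 2*k+2 = (3 + (2*k-4)) + 3 by omega, range_map_split, range_map_split, hr3]
  simp only [List.map_cons, List.map_nil]
  rw [h0, h1, h2, t0, t1, t2, hMid]

lemma w2_eq (k : ℕ) (hk : 2 ≤ k) (z' z : V) (c : ℕ → V) :
    [c (2 * k)] ++
        ((List.range (k - 1)).map fun t =>
          [c (2 * (k - 1 - t)), c (2 * (k - 1 - t) + 1)]).flatten ++
        [z', c 1, z] =
      (List.range (2*k+2)).map (W2F k z' z c) := by
  have h0 : W2F k z' z c 0 = c (2*k) := by unfold W2F; rw [if_pos rfl]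
  have t0 : W2F k z' z c (1 + (2*k-2) + 0) = z' := by
    unfold W2F; rw [if_neg (by omega), if_pos (by omega)]
  have t1 : W2F k z' z c (1 + (2*k-2) + 1) = c 1 := by
    unfold W2F; rw [if_neg (by omega), if_neg (by omega), if_pos (by omega)]
  have t2 : W2F k z' z c (1 + (2*k-2) + 2) = z := by
    unfold W2F
    rw [if_neg (by omega), if_neg (by omega), if_neg (by omega), if_pos (by omega)]
  have hMid : ((List.range (k - 1)).map fun t =>
        [c (2 * (k - 1 - t)), c (2 * (k - 1 - t) + 1)]).flatten =
      (List.range (2*k-2)).map (fun s => W2F k z' z c (1 + s)) := by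
    rw [flatten_pairs (fun t => c (2 * (k - 1 - t))) (fun t => c (2 * (k - 1 - t) + 1)),
      show 2 * (k - 1) = 2*k-2 by omega]
    refine List.map_congr_left ?_
    intro s hs
    rw [List.mem_range] at hs
    by_cases hp : s % 2 = 0
    · rw [if_pos hp]
      unfold W2F
      rw [if_neg (by omega), if_neg (by omega), if_neg (by omega), if_neg (by omega),
        if_pos (by omega)]
      congr 1; omega
    · rw [if_neg hp]
      unfold W2F
      rw [if_neg (by omega), if_neg (by omega), if_neg (by omega), if_neg (by omega),
        if_neg (by omega)]
      congr 1; omega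
  rw [show 2*k+2 = (1 + (2*k-2)) + 3 by omega, range_map_split, range_map_split, hr3, hr1]
  simp only [List.map_cons, List.map_nil]
  rw [h0, t0, t1, t2, hMid]

lemma w3_eq (k : ℕ) (hk : 2 ≤ k) (z' z : V) (c : ℕ → V) :
    [z', c (2 * k), z] ++
        ((List.range (k - 1)).map fun t =>
          [c (2 * (k - 1 - t)), c (2 * (k - 1 - t) + 1)]).flatten ++
        [c 1] =
      (List.range (2*k+2)).map (W3F k z' z c) := by
  have h0 : W3F k z' z c 0 = z' := by unfold W3F; rw [if_pos rfl]
  have h1 : W3F k z' z c 1 = c (2*k) := by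
    unfold W3F; rw [if_neg (by omega), if_pos (by omega)]
  have h2 : W3F k z' z c 2 = z := by
    unfold W3F; rw [if_neg (by omega), if_neg (by omega), if_pos (by omega)]
  have t0 : W3F k z' z c (3 + (2*k-2) + 0) = c 1 := by
    unfold W3F
    rw [if_neg (by omega), if_neg (by omega), if_neg (by omega), if_pos (by omega)]
  have hMid : ((List.range (k - 1)).map fun t =>
        [c (2 * (k - 1 - t)), c (2 * (k - 1 - t) + 1)]).flatten =
      (List.range (2*k-2)).map (fun s => W3F k z' z c (3 + s)) := by
    rw [flatten_pairs (fun t => c (2 * (k - 1 - t))) (fun t => c (2 * (k - 1 - t) + 1)),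
      show 2 * (k - 1) = 2*k-2 by omega]
    refine List.map_congr_left ?_
    intro s hs
    rw [List.mem_range] at hs
    by_cases hp : s % 2 = 0
    · rw [if_pos hp]
      unfold W3F
      rw [if_neg (by omega), if_neg (by omega), if_neg (by omega), if_neg (by omega),
        if_pos (by omega)]
      congr 1; omega
    · rw [if_neg hp]
      unfold W3F
      rw [if_neg (by omega), if_neg (by omega), if_neg (by omega), if_neg (by omega),
        if_neg (by omega)]
      congr 1; omega
  rw [show 2*k+2 = (3 + (2*k-2)) + 1 by omega, range_map_split, range_map_split, hr3, hr1]
  simp only [List.map_cons, List.map_nil]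
  rw [h0, h1, h2, t0, hMid]


lemma W1F_val {k : ℕ} (hk : 2 ≤ k) {z' z : Fin (2*k+2)} {c : ℕ → Fin (2*k+2)}
    (hz' : z'.val = 0) (hz : z.val = 2*k+1)
    (hc : ∀ i, 1 ≤ i → i ≤ 2*k → (c i).val = i) :
    ∀ s, s < 2*k+2 → (W1F k z' z c s).val = sig1 k s := by
  intro s hs
  unfold W1F sig1
  split_ifs <;>
    first
      | exact hz' | exact hz | exact hc _ (by omega) (by omega)
      | exact (by assumption : False).elim

lemma W2F_val {k : ℕ} (hk : 2 ≤ k) {z' z : Fin (2*k+2)} {c : ℕ → Fin (2*k+2)}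
    (hz' : z'.val = 0) (hz : z.val = 2*k+1)
    (hc : ∀ i, 1 ≤ i → i ≤ 2*k → (c i).val = i) :
    ∀ s, s < 2*k+2 → (W2F k z' z c s).val = tau2 k s := by
  intro s hs
  unfold W2F tau2
  split_ifs <;>
    first
      | exact hz' | exact hz | exact hc _ (by omega) (by omega)
      | exact (by assumption : False).elim

lemma W3F_val {k : ℕ} (hk : 2 ≤ k) {z' z : Fin (2*k+2)} {c : ℕ → Fin (2*k+2)}
    (hz' : z'.val = 0) (hz : z.val = 2*k+1)
    (hc : ∀ i, 1 ≤ i → i ≤ 2*k → (c i).val = i) :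
    ∀ s, s < 2*k+2 → (W3F k z' z c s).val = tau3 k s := by
  intro s hs
  unfold W3F tau3
  split_ifs <;>
    first
      | exact hz' | exact hz | exact hc _ (by omega) (by omega)
      | exact (by assumption : False).elim



end EvenCycleAux

/-- For `k ≥ 2`, the words `w₁ = 0' c₂ c₁ u c₂ₖ c₂ₖ₋₁ 0`, `w₂ = c₂ₖ v 0' c₁ 0` and
`w₃ = 0' c₂ₖ 0 v c₁` are permutations of the vertices of the even cycle
`0' c₁ c₂ ⋯ c₂ₖ 0`, and their concatenation `w₁ w₂ w₃` represents that cycle.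
Here the cycle is `cycleGraph (2k+2)`, the vertex `0'` is the index `0`, the
vertex `cᵢ` is the index `i`, and the vertex `0` is the index `2k+1`. -/
theorem even_cycle_three_permutation_representation (k : ℕ) (hk : 2 ≤ k)
    (z' z : Fin (2 * k + 2)) (c : ℕ → Fin (2 * k + 2))
    (hz' : z'.val = 0) (hz : z.val = 2 * k + 1)
    (hc : ∀ i, 1 ≤ i → i ≤ 2 * k → (c i).val = i) :
    (∀ w, ([z', c 2, c 1] ++
        ((List.range (k - 2)).map fun t =>
          [c (2 * (t + 2)), c (2 * (t + 2) - 1)]).flatten ++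
        [c (2 * k), c (2 * k - 1), z]).count w = 1) ∧
    (∀ w, ([c (2 * k)] ++
        ((List.range (k - 1)).map fun t =>
          [c (2 * (k - 1 - t)), c (2 * (k - 1 - t) + 1)]).flatten ++
        [z', c 1, z]).count w = 1) ∧
    (∀ w, ([z', c (2 * k), z] ++
        ((List.range (k - 1)).map fun t =>
          [c (2 * (k - 1 - t)), c (2 * (k - 1 - t) + 1)]).flatten ++
        [c 1]).count w = 1) ∧
    Represents (SimpleGraph.cycleGraph (2 * k + 2))
      (([z', c 2, c 1] ++
        ((List.range (k - 2)).map fun t =>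
          [c (2 * (t + 2)), c (2 * (t + 2) - 1)]).flatten ++
        [c (2 * k), c (2 * k - 1), z]) ++
       ([c (2 * k)] ++
        ((List.range (k - 1)).map fun t =>
          [c (2 * (k - 1 - t)), c (2 * (k - 1 - t) + 1)]).flatten ++
        [z', c 1, z]) ++
       ([z', c (2 * k), z] ++
        ((List.range (k - 1)).map fun t =>
          [c (2 * (k - 1 - t)), c (2 * (k - 1 - t) + 1)]).flatten ++
        [c 1])) := by
  have hne2 : ∀ {a b : Fin (2*k+2)}, a ≠ b → a.val ≠ b.val := fun h hv => h (Fin.ext hv)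
  have hv1 := W1F_val hk hz' hz hc
  have hv2 := W2F_val hk hz' hz hc
  have hv3 := W3F_val hk hz' hz hc
  have hinj1 : ∀ s, s < 2*k+2 → ∀ t, t < 2*k+2 →
      W1F k z' z c s = W1F k z' z c t → s = t := by
    intro s hs t ht h
    exact sig1_inj s hs t ht (by rw [← hv1 s hs, ← hv1 t ht, h])
  have hinj2 : ∀ s, s < 2*k+2 → ∀ t, t < 2*k+2 →
      W2F k z' z c s = W2F k z' z c t → s = t := by
    intro s hs t ht h
    exact tau2_inj hk s hs t ht (by rw [← hv2 s hs, ← hv2 t ht, h])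
  have hinj3 : ∀ s, s < 2*k+2 → ∀ t, t < 2*k+2 →
      W3F k z' z c s = W3F k z' z c t → s = t := by
    intro s hs t ht h
    exact tau3_inj hk s hs t ht (by rw [← hv3 s hs, ← hv3 t ht, h])
  have hat1 : ∀ v : Fin (2*k+2), sig1 k v.val < 2*k+2 ∧
      W1F k z' z c (sig1 k v.val) = v := by
    intro v
    obtain ⟨hlt, heq⟩ := sig1_spec hk v.val v.isLt
    exact ⟨hlt, Fin.ext (by rw [hv1 _ hlt, heq])⟩
  have hat2 : ∀ v : Fin (2*k+2), sig2 k v.val < 2*k+2 ∧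
      W2F k z' z c (sig2 k v.val) = v := by
    intro v
    obtain ⟨hlt, heq⟩ := sig2_spec hk v.val v.isLt
    exact ⟨hlt, Fin.ext (by rw [hv2 _ hlt, heq])⟩
  have hat3 : ∀ v : Fin (2*k+2), sig3 k v.val < 2*k+2 ∧
      W3F k z' z c (sig3 k v.val) = v := by
    intro v
    obtain ⟨hlt, heq⟩ := sig3_spec hk v.val v.isLt
    exact ⟨hlt, Fin.ext (by rw [hv3 _ hlt, heq])⟩
  have hnd1 : ((List.range (2*k+2)).map (W1F k z' z c)).Nodup :=
    (List.nodup_range).map_on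
      (fun s hs t ht h => hinj1 s (List.mem_range.mp hs) t (List.mem_range.mp ht) h)
  have hnd2 : ((List.range (2*k+2)).map (W2F k z' z c)).Nodup :=
    (List.nodup_range).map_on
      (fun s hs t ht h => hinj2 s (List.mem_range.mp hs) t (List.mem_range.mp ht) h)
  have hnd3 : ((List.range (2*k+2)).map (W3F k z' z c)).Nodup :=
    (List.nodup_range).map_on
      (fun s hs t ht h => hinj3 s (List.mem_range.mp hs) t (List.mem_range.mp ht) h)
  have hmem1 : ∀ v : Fin (2*k+2), v ∈ (List.range (2*k+2)).map (W1F k z' z c) :=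
    fun v => List.mem_map.mpr ⟨sig1 k v.val, List.mem_range.mpr (hat1 v).1, (hat1 v).2⟩
  have hmem2 : ∀ v : Fin (2*k+2), v ∈ (List.range (2*k+2)).map (W2F k z' z c) :=
    fun v => List.mem_map.mpr ⟨sig2 k v.val, List.mem_range.mpr (hat2 v).1, (hat2 v).2⟩
  have hmem3 : ∀ v : Fin (2*k+2), v ∈ (List.range (2*k+2)).map (W3F k z' z c) :=
    fun v => List.mem_map.mpr ⟨sig3 k v.val, List.mem_range.mpr (hat3 v).1, (hat3 v).2⟩
  refine ⟨?_, ?_, ?_, ?_, ?_⟩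
  · intro w
    rw [w1_eq k hk z' z c]
    exact List.count_eq_one_of_mem hnd1 (hmem1 w)
  · intro w
    rw [w2_eq k hk z' z c]
    exact List.count_eq_one_of_mem hnd2 (hmem2 w)
  · intro w
    rw [w3_eq k hk z' z c]
    exact List.count_eq_one_of_mem hnd3 (hmem3 w)
  · intro v
    rw [w1_eq k hk z' z c]
    exact List.mem_append.mpr (Or.inl (List.mem_append.mpr (Or.inl (hmem1 v))))
  · intro a b hab
    have hne : a.val ≠ b.val := hne2 hab
    have hpab1 : sig1 k a.val ≠ sig1 k b.val := by
      intro h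
      exact hne (by rw [← (sig1_spec hk a.val a.isLt).2, ← (sig1_spec hk b.val b.isLt).2, h])
    have hpab2 : sig2 k a.val ≠ sig2 k b.val := by
      intro h
      exact hne (by rw [← (sig2_spec hk a.val a.isLt).2, ← (sig2_spec hk b.val b.isLt).2, h])
    have hpab3 : sig3 k a.val ≠ sig3 k b.val := by
      intro h
      exact hne (by rw [← (sig3_spec hk a.val a.isLt).2, ← (sig3_spec hk b.val b.isLt).2, h])
    rw [SimpleGraph.cycleGraph_adj, fin_sub_one_iff, fin_sub_one_iff]
    unfold Alternates
    rw [w1_eq k hk z' z c, w2_eq k hk z' z c, w3_eq k hk z' z c,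
      List.filter_append, List.filter_append,
      filter_map_range _ _ hinj1 a b _ _ (hat1 a).1 (hat1 b).1 (hat1 a).2 (hat1 b).2 hpab1,
      filter_map_range _ _ hinj2 a b _ _ (hat2 a).1 (hat2 b).1 (hat2 a).2 (hat2 b).2 hpab2,
      filter_map_range _ _ hinj3 a b _ _ (hat3 a).1 (hat3 b).1 (hat3 a).2 (hat3 b).2 hpab3,
      chain'_three_pairs hab]
    exact key_iff hk a.val b.val a.isLt b.isLt hne
end
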